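/- arXiv:2501.12045 — 5 statements merged into one kernel-verified Lean document; each statement's English description precedes it below -/
import Mathlib

section
/- A position M = (n_0, ..., n_6) in extended circular nim ECN(7_{1,2}, 5) is a P-position if and only if some cyclic rotation or reflection of M lies in P = {(n_0,...,n_6) : n_0 = 0 and n_1 = n_2 = n_3 + n_4 = n_5 = n_6}. -/
/-- `IsN move x`: `x` is an N-position (next player wins) for the game with
move relation `move` (least fixed point; correct for short games). -/
inductive IsN {α : Type*} (move : α → α → Prop) : α → Prop
  | intro (x y : α) (hxy : move x y) (hy : ∀ z, move y z → IsN move z) : IsN move x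

/-- `IsP move x`: `x` is a P-position (previous player wins) under normal play. -/
def IsP {α : Type*} (move : α → α → Prop) (x : α) : Prop :=
  ∀ y, move x y → IsN move y

/-- Move relation of extended circular nim `ECN(m_S, k)`: reduce some piles,
all lying among `k` piles taken every `s`-th pile (for some `s ∈ S`) starting
at some index `i`, removing at least one token in total. -/
def ecnMove (m : ℕ) (S : Set ℕ) (k : ℕ) (x y : Fin m → ℕ) : Prop :=
  y ≠ x ∧ (∀ j, y j ≤ x j) ∧
    ∃ s ∈ S, ∃ i : ℕ, ∀ j : Fin m, y j ≠ x j → ∃ t < k, (j : ℕ) = (i + t * s) % m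

/-- `cyc m Q n` : some cyclic rotation of `n`, or of its reversal, satisfies `Q`
(the relation `M ∈_↻ P`). -/
def cyc (m : ℕ) (Q : (Fin m → ℕ) → Prop) (n : Fin m → ℕ) : Prop :=
  ∃ r : ℕ,
    Q (fun j => n ⟨(j.1 + r) % m, Nat.mod_lt _ (Nat.lt_of_le_of_lt (Nat.zero_le _) j.isLt)⟩) ∨
    Q (fun j => n ⟨(r + (m - j.1)) % m, Nat.mod_lt _ (Nat.lt_of_le_of_lt (Nat.zero_le _) j.isLt)⟩)

def idx (k : ℕ) : Fin 7 := ⟨k % 7, Nat.mod_lt _ (by norm_num)⟩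

lemma Eap (f : Fin 7 → ℕ) (a b : ℕ) (h : a % 7 = b % 7) : f (idx a) = f (idx b) :=
  congrArg f (Fin.ext h)

def PP (n : Fin 7 → ℕ) : Prop :=
  (n (idx 0) = 0 ∧ n (idx 1) = n (idx 2) ∧ n (idx 2) = n (idx 3) + n (idx 4) ∧ n (idx 3) + n (idx 4) = n (idx 5) ∧ n (idx 5) = n (idx 6)) ∨
  (n (idx 1) = 0 ∧ n (idx 2) = n (idx 3) ∧ n (idx 3) = n (idx 4) + n (idx 5) ∧ n (idx 4) + n (idx 5) = n (idx 6) ∧ n (idx 6) = n (idx 0)) ∨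
  (n (idx 2) = 0 ∧ n (idx 3) = n (idx 4) ∧ n (idx 4) = n (idx 5) + n (idx 6) ∧ n (idx 5) + n (idx 6) = n (idx 0) ∧ n (idx 0) = n (idx 1)) ∨
  (n (idx 3) = 0 ∧ n (idx 4) = n (idx 5) ∧ n (idx 5) = n (idx 6) + n (idx 0) ∧ n (idx 6) + n (idx 0) = n (idx 1) ∧ n (idx 1) = n (idx 2)) ∨
  (n (idx 4) = 0 ∧ n (idx 5) = n (idx 6) ∧ n (idx 6) = n (idx 0) + n (idx 1) ∧ n (idx 0) + n (idx 1) = n (idx 2) ∧ n (idx 2) = n (idx 3)) ∨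
  (n (idx 5) = 0 ∧ n (idx 6) = n (idx 0) ∧ n (idx 0) = n (idx 1) + n (idx 2) ∧ n (idx 1) + n (idx 2) = n (idx 3) ∧ n (idx 3) = n (idx 4)) ∨
  (n (idx 6) = 0 ∧ n (idx 0) = n (idx 1) ∧ n (idx 1) = n (idx 2) + n (idx 3) ∧ n (idx 2) + n (idx 3) = n (idx 4) ∧ n (idx 4) = n (idx 5))

lemma rotP (n : Fin 7 → ℕ) (r : ℕ)
    (h0 : n (idx (0 + r)) = 0)
    (h1 : n (idx (1 + r)) = n (idx (2 + r)))
    (h2 : n (idx (2 + r)) = n (idx (3 + r)) + n (idx (4 + r)))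
    (h3 : n (idx (3 + r)) + n (idx (4 + r)) = n (idx (5 + r)))
    (h4 : n (idx (5 + r)) = n (idx (6 + r))) : PP n := by
  unfold PP
  have hc : r % 7 = 0 ∨ r % 7 = 1 ∨ r % 7 = 2 ∨ r % 7 = 3 ∨ r % 7 = 4 ∨ r % 7 = 5 ∨ r % 7 = 6 := by
    omega
  rcases hc with hc | hc | hc | hc | hc | hc | hc
  · simp only [Eap n (0 + r) 0 (by omega), Eap n (1 + r) 1 (by omega), Eap n (2 + r) 2 (by omega), Eap n (3 + r) 3 (by omega), Eap n (4 + r) 4 (by omega), Eap n (5 + r) 5 (by omega), Eap n (6 + r) 6 (by omega)] at h0 h1 h2 h3 h4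
    exact Or.inl (⟨h0, h1, h2, h3, h4⟩)
  · simp only [Eap n (0 + r) 1 (by omega), Eap n (1 + r) 2 (by omega), Eap n (2 + r) 3 (by omega), Eap n (3 + r) 4 (by omega), Eap n (4 + r) 5 (by omega), Eap n (5 + r) 6 (by omega), Eap n (6 + r) 0 (by omega)] at h0 h1 h2 h3 h4
    exact Or.inr (Or.inl (⟨h0, h1, h2, h3, h4⟩))
  · simp only [Eap n (0 + r) 2 (by omega), Eap n (1 + r) 3 (by omega), Eap n (2 + r) 4 (by omega), Eap n (3 + r) 5 (by omega), Eap n (4 + r) 6 (by omega), Eap n (5 + r) 0 (by omega), Eap n (6 + r) 1 (by omega)] at h0 h1 h2 h3 h4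
    exact Or.inr (Or.inr (Or.inl (⟨h0, h1, h2, h3, h4⟩)))
  · simp only [Eap n (0 + r) 3 (by omega), Eap n (1 + r) 4 (by omega), Eap n (2 + r) 5 (by omega), Eap n (3 + r) 6 (by omega), Eap n (4 + r) 0 (by omega), Eap n (5 + r) 1 (by omega), Eap n (6 + r) 2 (by omega)] at h0 h1 h2 h3 h4
    exact Or.inr (Or.inr (Or.inr (Or.inl (⟨h0, h1, h2, h3, h4⟩))))
  · simp only [Eap n (0 + r) 4 (by omega), Eap n (1 + r) 5 (by omega), Eap n (2 + r) 6 (by omega), Eap n (3 + r) 0 (by omega), Eap n (4 + r) 1 (by omega), Eap n (5 + r) 2 (by omega), Eap n (6 + r) 3 (by omega)] at h0 h1 h2 h3 h4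
    exact Or.inr (Or.inr (Or.inr (Or.inr (Or.inl (⟨h0, h1, h2, h3, h4⟩)))))
  · simp only [Eap n (0 + r) 5 (by omega), Eap n (1 + r) 6 (by omega), Eap n (2 + r) 0 (by omega), Eap n (3 + r) 1 (by omega), Eap n (4 + r) 2 (by omega), Eap n (5 + r) 3 (by omega), Eap n (6 + r) 4 (by omega)] at h0 h1 h2 h3 h4
    exact Or.inr (Or.inr (Or.inr (Or.inr (Or.inr (Or.inl (⟨h0, h1, h2, h3, h4⟩))))))
  · simp only [Eap n (0 + r) 6 (by omega), Eap n (1 + r) 0 (by omega), Eap n (2 + r) 1 (by omega), Eap n (3 + r) 2 (by omega), Eap n (4 + r) 3 (by omega), Eap n (5 + r) 4 (by omega), Eap n (6 + r) 5 (by omega)] at h0 h1 h2 h3 h4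
    exact Or.inr (Or.inr (Or.inr (Or.inr (Or.inr (Or.inr (⟨h0, h1, h2, h3, h4⟩))))))

lemma reflP (n : Fin 7 → ℕ) (r : ℕ)
    (h0 : n (idx (r + 7)) = 0)
    (h1 : n (idx (r + 6)) = n (idx (r + 5)))
    (h2 : n (idx (r + 5)) = n (idx (r + 4)) + n (idx (r + 3)))
    (h3 : n (idx (r + 4)) + n (idx (r + 3)) = n (idx (r + 2)))
    (h4 : n (idx (r + 2)) = n (idx (r + 1))) : PP n := by
  unfold PP
  have hc : r % 7 = 0 ∨ r % 7 = 1 ∨ r % 7 = 2 ∨ r % 7 = 3 ∨ r % 7 = 4 ∨ r % 7 = 5 ∨ r % 7 = 6 := by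
    omega
  rcases hc with hc | hc | hc | hc | hc | hc | hc
  · simp only [Eap n (r + 1) 1 (by omega), Eap n (r + 2) 2 (by omega), Eap n (r + 3) 3 (by omega), Eap n (r + 4) 4 (by omega), Eap n (r + 5) 5 (by omega), Eap n (r + 6) 6 (by omega), Eap n (r + 7) 0 (by omega)] at h0 h1 h2 h3 h4
    exact Or.inl (⟨h0, h4.symm, by omega, by omega, h1.symm⟩)
  · simp only [Eap n (r + 1) 2 (by omega), Eap n (r + 2) 3 (by omega), Eap n (r + 3) 4 (by omega), Eap n (r + 4) 5 (by omega), Eap n (r + 5) 6 (by omega), Eap n (r + 6) 0 (by omega), Eap n (r + 7) 1 (by omega)] at h0 h1 h2 h3 h4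
    exact Or.inr (Or.inl (⟨h0, h4.symm, by omega, by omega, h1.symm⟩))
  · simp only [Eap n (r + 1) 3 (by omega), Eap n (r + 2) 4 (by omega), Eap n (r + 3) 5 (by omega), Eap n (r + 4) 6 (by omega), Eap n (r + 5) 0 (by omega), Eap n (r + 6) 1 (by omega), Eap n (r + 7) 2 (by omega)] at h0 h1 h2 h3 h4
    exact Or.inr (Or.inr (Or.inl (⟨h0, h4.symm, by omega, by omega, h1.symm⟩)))
  · simp only [Eap n (r + 1) 4 (by omega), Eap n (r + 2) 5 (by omega), Eap n (r + 3) 6 (by omega), Eap n (r + 4) 0 (by omega), Eap n (r + 5) 1 (by omega), Eap n (r + 6) 2 (by omega), Eap n (r + 7) 3 (by omega)] at h0 h1 h2 h3 h4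
    exact Or.inr (Or.inr (Or.inr (Or.inl (⟨h0, h4.symm, by omega, by omega, h1.symm⟩))))
  · simp only [Eap n (r + 1) 5 (by omega), Eap n (r + 2) 6 (by omega), Eap n (r + 3) 0 (by omega), Eap n (r + 4) 1 (by omega), Eap n (r + 5) 2 (by omega), Eap n (r + 6) 3 (by omega), Eap n (r + 7) 4 (by omega)] at h0 h1 h2 h3 h4
    exact Or.inr (Or.inr (Or.inr (Or.inr (Or.inl (⟨h0, h4.symm, by omega, by omega, h1.symm⟩)))))
  · simp only [Eap n (r + 1) 6 (by omega), Eap n (r + 2) 0 (by omega), Eap n (r + 3) 1 (by omega), Eap n (r + 4) 2 (by omega), Eap n (r + 5) 3 (by omega), Eap n (r + 6) 4 (by omega), Eap n (r + 7) 5 (by omega)] at h0 h1 h2 h3 h4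
    exact Or.inr (Or.inr (Or.inr (Or.inr (Or.inr (Or.inl (⟨h0, h4.symm, by omega, by omega, h1.symm⟩))))))
  · simp only [Eap n (r + 1) 0 (by omega), Eap n (r + 2) 1 (by omega), Eap n (r + 3) 2 (by omega), Eap n (r + 4) 3 (by omega), Eap n (r + 5) 4 (by omega), Eap n (r + 6) 5 (by omega), Eap n (r + 7) 6 (by omega)] at h0 h1 h2 h3 h4
    exact Or.inr (Or.inr (Or.inr (Or.inr (Or.inr (Or.inr (⟨h0, h4.symm, by omega, by omega, h1.symm⟩))))))

lemma cyc_iff_PP (n : Fin 7 → ℕ) :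
    cyc 7 (fun x => x 0 = 0 ∧ x 1 = x 2 ∧ x 2 = x 3 + x 4 ∧ x 3 + x 4 = x 5 ∧
        x 5 = x 6) n ↔ PP n := by
  constructor
  · rintro ⟨r, h | h⟩
    · obtain ⟨h0, h1, h2, h3, h4⟩ := h
      exact rotP n r h0 h1 h2 h3 h4
    · obtain ⟨h0, h1, h2, h3, h4⟩ := h
      exact reflP n r h0 h1 h2 h3 h4
  · intro hP
    unfold PP at hP
    rcases hP with h | h | h | h | h | h | h
    · exact ⟨0, Or.inl h⟩
    · exact ⟨1, Or.inl h⟩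
    · exact ⟨2, Or.inl h⟩
    · exact ⟨3, Or.inl h⟩
    · exact ⟨4, Or.inl h⟩
    · exact ⟨5, Or.inl h⟩
    · exact ⟨6, Or.inl h⟩
lemma gameChar {α : Type*} (move : α → α → Prop) (Pset : α → Prop) (μ : α → ℕ)
    (hdec : ∀ x y, move x y → μ y < μ x)
    (h1 : ∀ x y, Pset x → move x y → Pset y → False)
    (h2 : ∀ x, ¬ Pset x → ∃ y, move x y ∧ Pset y) (x : α) :
    IsP move x ↔ Pset x := by
  have A : ∀ N x, μ x ≤ N → Pset x → IsP move x := by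
    intro N
    induction N with
    | zero => intro x hx hP y hmy; exact absurd (hdec x y hmy) (by omega)
    | succ N ih =>
      intro x hx hP y hmy
      have hy : ¬ Pset y := fun h => h1 x y hP hmy h
      obtain ⟨z, hyz, hz⟩ := h2 y hy
      have hμ : μ z ≤ N := by
        have := hdec x y hmy; have := hdec y z hyz; omega
      exact IsN.intro y z hyz (fun w hw => ih z hμ hz w hw)
  have B : ∀ N x, μ x ≤ N → Pset x → ¬ IsN move x := by
    intro N
    induction N with
    | zero =>
      intro x hx hP hN
      rcases hN with ⟨x, y, hxy, hy⟩
      exact absurd (hdec x y hxy) (by omega)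
    | succ N ih =>
      intro x hx hP hN
      rcases hN with ⟨x, y, hxy, hy⟩
      have hny : ¬ Pset y := fun h => h1 x y hP hxy h
      obtain ⟨z, hyz, hz⟩ := h2 y hny
      have hμ : μ z ≤ N := by
        have := hdec x y hxy; have := hdec y z hyz; omega
      exact ih z hμ hz (hy z hyz)
  constructor
  · intro hP
    by_contra hx
    obtain ⟨y, hxy, hy⟩ := h2 x hx
    exact B (μ y) y le_rfl hy (hP y hxy)
  · intro hP
    exact A (μ x) x le_rfl hP

lemma mkMove1 (n y : Fin 7 → ℕ) (p : ℕ) (hne : y ≠ n) (hle : ∀ j, y j ≤ n j)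
    (e1 : y (idx (p + 5)) = n (idx (p + 5))) (e2 : y (idx (p + 6)) = n (idx (p + 6))) :
    ecnMove 7 {1, 2} 5 n y := by
  refine ⟨hne, hle, 1, Or.inl rfl, p, ?_⟩
  intro j hj
  have h5 : j ≠ idx (p + 5) := by rintro rfl; exact hj e1
  have h6 : j ≠ idx (p + 6) := by rintro rfl; exact hj e2
  have h5' : j.1 ≠ (p + 5) % 7 := fun h => h5 (Fin.ext h)
  have h6' : j.1 ≠ (p + 6) % 7 := fun h => h6 (Fin.ext h)
  have hj7 : j.1 < 7 := j.isLt
  exact ⟨(j.1 + 7 - p % 7) % 7, by omega, by omega⟩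

lemma mkMove2 (n y : Fin 7 → ℕ) (p : ℕ) (hne : y ≠ n) (hle : ∀ j, y j ≤ n j)
    (e1 : y (idx (p + 3)) = n (idx (p + 3))) (e2 : y (idx (p + 5)) = n (idx (p + 5))) :
    ecnMove 7 {1, 2} 5 n y := by
  refine ⟨hne, hle, 2, Or.inr rfl, p, ?_⟩
  intro j hj
  have h3 : j ≠ idx (p + 3) := by rintro rfl; exact hj e1
  have h5 : j ≠ idx (p + 5) := by rintro rfl; exact hj e2
  have h3' : j.1 ≠ (p + 3) % 7 := fun h => h3 (Fin.ext h)
  have h5' : j.1 ≠ (p + 5) % 7 := fun h => h5 (Fin.ext h)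
  have hj7 : j.1 < 7 := j.isLt
  obtain ⟨u, hu7, hju⟩ : ∃ u, u < 7 ∧ (j.1 : ℕ) = (p + u) % 7 :=
    ⟨(j.1 + 7 - p % 7) % 7, by omega, by omega⟩
  have hu3 : u ≠ 3 := by rintro rfl; exact h3' (by omega)
  have hu5 : u ≠ 5 := by rintro rfl; exact h5' (by omega)
  have hcase : u = 0 ∨ u = 1 ∨ u = 2 ∨ u = 3 ∨ u = 4 ∨ u = 5 ∨ u = 6 := by omega
  rcases hcase with h | h | h | h | h | h | h
  · exact ⟨0, by norm_num, by omega⟩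
  · exact ⟨4, by norm_num, by omega⟩
  · exact ⟨1, by norm_num, by omega⟩
  · exact absurd h hu3
  · exact ⟨2, by norm_num, by omega⟩
  · exact absurd h hu5
  · exact ⟨3, by norm_num, by omega⟩
theorem cover0 (n0 n1 n2 n3 n4 n5 n6 : ℕ)
    (h1 : n0 ≤ n1) (h2 : n0 ≤ n2) (h3 : n0 ≤ n3) (h4 : n0 ≤ n4) (h5 : n0 ≤ n5) (h6 : n0 ≤ n6)
    (h7 : n1 ≤ n6) :
    (n3+n4 ≤ n1 ∧ n3+n4 ≤ n2 ∧ n3+n4 ≤ n5 ∧ n3+n4 ≤ n6) ∨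
    (n3 ≤ n1 ∧ n1 ≤ n3+n4 ∧ n1 ≤ n2 ∧ n1 ≤ n5 ∧ n1 ≤ n6) ∨
    (n4 ≤ n2 ∧ n2 ≤ n3+n4 ∧ n2 ≤ n1 ∧ n2 ≤ n5 ∧ n2 ≤ n6) ∨
    (n3 ≤ n5 ∧ n5 ≤ n3+n4 ∧ n5 ≤ n1 ∧ n5 ≤ n2 ∧ n5 ≤ n6) ∨
    (n0 ≤ n2 ∧ n2 ≤ n6+n0 ∧ n2 ≤ n4 ∧ n2 ≤ n5 ∧ n2 ≤ n1) ∨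
    (n0+n1 ≤ n5 ∧ n0+n1 ≤ n6 ∧ n0+n1 ≤ n2 ∧ n0+n1 ≤ n3) ∨
    (n0 ≤ n5 ∧ n5 ≤ n0+n1 ∧ n5 ≤ n6 ∧ n5 ≤ n2 ∧ n5 ≤ n3) ∨
    (n1 ≤ n6 ∧ n6 ≤ n0+n1 ∧ n6 ≤ n5 ∧ n6 ≤ n2 ∧ n6 ≤ n3) ∨
    (n0 ≤ n2 ∧ n2 ≤ n0+n1 ∧ n2 ≤ n5 ∧ n2 ≤ n6 ∧ n2 ≤ n3) ∨
    (n1 ≤ n3 ∧ n3 ≤ n0+n1 ∧ n3 ≤ n5 ∧ n3 ≤ n6 ∧ n3 ≤ n2) := by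
  rcases le_or_gt (n0+n1) n2 with h1 | h1
  · rcases le_or_gt (n0+n1) n5 with h2 | h2
    · rcases le_or_gt (n3) n1 with h3 | h3
      · rcases le_or_gt (n3+n4) n1 with h4 | h4
        · exact Or.inl (by omega)
        · exact Or.inr (Or.inl (by omega))
      · rcases le_or_gt (n0+n1) n6 with h4 | h4
        · rcases le_or_gt (n0+n1) n3 with h5 | h5
          · exact Or.inr (Or.inr (Or.inr (Or.inr (Or.inr (Or.inl (by omega))))))
          · exact Or.inr (Or.inr (Or.inr (Or.inr (Or.inr (Or.inr (Or.inr (Or.inr (Or.inr ((by omega))))))))))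
        · rcases le_or_gt (n3) n6 with h5 | h5
          · exact Or.inr (Or.inr (Or.inr (Or.inr (Or.inr (Or.inr (Or.inr (Or.inr (Or.inr ((by omega))))))))))
          · exact Or.inr (Or.inr (Or.inr (Or.inr (Or.inr (Or.inr (Or.inr (Or.inl (by omega))))))))
    · rcases le_or_gt (n5) n3 with h3 | h3
      · rcases le_or_gt (n5) n6 with h4 | h4
        · exact Or.inr (Or.inr (Or.inr (Or.inr (Or.inr (Or.inr (Or.inl (by omega)))))))
        · exact Or.inr (Or.inr (Or.inr (Or.inr (Or.inr (Or.inr (Or.inr (Or.inl (by omega))))))))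
      · rcases le_or_gt (n1) n5 with h4 | h4
        · rcases le_or_gt (n1) n3 with h5 | h5
          · rcases le_or_gt (n3) n6 with h6 | h6
            · exact Or.inr (Or.inr (Or.inr (Or.inr (Or.inr (Or.inr (Or.inr (Or.inr (Or.inr ((by omega))))))))))
            · exact Or.inr (Or.inr (Or.inr (Or.inr (Or.inr (Or.inr (Or.inr (Or.inl (by omega))))))))
          · rcases le_or_gt (n3+n4) n1 with h6 | h6
            · exact Or.inl (by omega)
            · exact Or.inr (Or.inl (by omega))
        · rcases le_or_gt (n3+n4) n5 with h5 | h5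
          · exact Or.inl (by omega)
          · exact Or.inr (Or.inr (Or.inr (Or.inl (by omega))))
  · rcases le_or_gt (n2) n5 with h2 | h2
    · rcases le_or_gt (n2) n3 with h3 | h3
      · rcases le_or_gt (n2) n6 with h4 | h4
        · exact Or.inr (Or.inr (Or.inr (Or.inr (Or.inr (Or.inr (Or.inr (Or.inr (Or.inl (by omega)))))))))
        · exact Or.inr (Or.inr (Or.inr (Or.inr (Or.inr (Or.inr (Or.inr (Or.inl (by omega))))))))
      · rcases le_or_gt (n1) n2 with h4 | h4
        · rcases le_or_gt (n1) n3 with h5 | h5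
          · rcases le_or_gt (n3) n6 with h6 | h6
            · exact Or.inr (Or.inr (Or.inr (Or.inr (Or.inr (Or.inr (Or.inr (Or.inr (Or.inr ((by omega))))))))))
            · exact Or.inr (Or.inr (Or.inr (Or.inr (Or.inr (Or.inr (Or.inr (Or.inl (by omega))))))))
          · rcases le_or_gt (n3+n4) n1 with h6 | h6
            · exact Or.inl (by omega)
            · exact Or.inr (Or.inl (by omega))
        · rcases le_or_gt (n2) n4 with h5 | h5
          · exact Or.inr (Or.inr (Or.inr (Or.inr (Or.inl (by omega)))))
          · rcases le_or_gt (n3+n4) n2 with h6 | h6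
            · exact Or.inl (by omega)
            · exact Or.inr (Or.inr (Or.inl (by omega)))
    · rcases le_or_gt (n5) n3 with h3 | h3
      · rcases le_or_gt (n5) n6 with h4 | h4
        · exact Or.inr (Or.inr (Or.inr (Or.inr (Or.inr (Or.inr (Or.inl (by omega)))))))
        · exact Or.inr (Or.inr (Or.inr (Or.inr (Or.inr (Or.inr (Or.inr (Or.inl (by omega))))))))
      · rcases le_or_gt (n1) n5 with h4 | h4
        · rcases le_or_gt (n1) n3 with h5 | h5
          · rcases le_or_gt (n3) n6 with h6 | h6
            · exact Or.inr (Or.inr (Or.inr (Or.inr (Or.inr (Or.inr (Or.inr (Or.inr (Or.inr ((by omega))))))))))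
            · exact Or.inr (Or.inr (Or.inr (Or.inr (Or.inr (Or.inr (Or.inr (Or.inl (by omega))))))))
          · rcases le_or_gt (n3+n4) n1 with h6 | h6
            · exact Or.inl (by omega)
            · exact Or.inr (Or.inl (by omega))
        · rcases le_or_gt (n3+n4) n5 with h5 | h5
          · exact Or.inl (by omega)
          · exact Or.inr (Or.inr (Or.inr (Or.inl (by omega))))

def patf (q A B C : ℕ) : Fin 7 → ℕ := fun j => ![0, A, A, B, C, A, A] (idx (j.1 + 7 - q % 7))

lemma patf_at (q A B C m : ℕ) (hm : m < 7) :
    patf q A B C (idx (q + m)) = ![0, A, A, B, C, A, A] (idx m) := by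
  show (![0, A, A, B, C, A, A]) (idx ((q + m) % 7 + 7 - q % 7)) = _
  exact Eap _ _ _ (by omega)

lemma patf_PP (q A B C : ℕ) (hBC : B + C = A) : PP (patf q A B C) := by
  refine rotP _ q ?_ ?_ ?_ ?_ ?_
  · rw [Eap (patf q A B C) (0 + q) (q + 0) (by omega), patf_at q A B C 0 (by norm_num)]
    rfl
  · rw [Eap (patf q A B C) (1 + q) (q + 1) (by omega), Eap (patf q A B C) (2 + q) (q + 2) (by omega),
      patf_at q A B C 1 (by norm_num), patf_at q A B C 2 (by norm_num)]
    rfl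
  · rw [Eap (patf q A B C) (2 + q) (q + 2) (by omega), Eap (patf q A B C) (3 + q) (q + 3) (by omega),
      Eap (patf q A B C) (4 + q) (q + 4) (by omega), patf_at q A B C 2 (by norm_num),
      patf_at q A B C 3 (by norm_num), patf_at q A B C 4 (by norm_num)]
    exact hBC.symm
  · rw [Eap (patf q A B C) (5 + q) (q + 5) (by omega), Eap (patf q A B C) (3 + q) (q + 3) (by omega),
      Eap (patf q A B C) (4 + q) (q + 4) (by omega), patf_at q A B C 5 (by norm_num),
      patf_at q A B C 3 (by norm_num), patf_at q A B C 4 (by norm_num)]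
    exact hBC
  · rw [Eap (patf q A B C) (5 + q) (q + 5) (by omega), Eap (patf q A B C) (6 + q) (q + 6) (by omega),
      patf_at q A B C 5 (by norm_num), patf_at q A B C 6 (by norm_num)]
    rfl

lemma patf_le (n : Fin 7 → ℕ) (q A B C : ℕ)
    (h1 : A ≤ n (idx (q + 1))) (h2 : A ≤ n (idx (q + 2))) (h3 : B ≤ n (idx (q + 3)))
    (h4 : C ≤ n (idx (q + 4))) (h5 : A ≤ n (idx (q + 5))) (h6 : A ≤ n (idx (q + 6))) :
    ∀ j, patf q A B C j ≤ n j := by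
  intro j
  have hj7 : j.1 < 7 := j.isLt
  obtain ⟨m, hm7, hjm⟩ : ∃ m, m < 7 ∧ j.1 = (q + m) % 7 :=
    ⟨(j.1 + 7 - q % 7) % 7, by omega, by omega⟩
  have hj : j = idx (q + m) := Fin.ext hjm
  rw [hj, patf_at q A B C m hm7]
  have hc : m = 0 ∨ m = 1 ∨ m = 2 ∨ m = 3 ∨ m = 4 ∨ m = 5 ∨ m = 6 := by omega
  rcases hc with rfl | rfl | rfl | rfl | rfl | rfl | rfl
  · exact Nat.zero_le _
  · exact h1
  · exact h2
  · exact h3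
  · exact h4
  · exact h5
  · exact h6


lemma scheme34 (n : Fin 7 → ℕ) (hn : ¬ PP n) (q : ℕ)
    (h1 : n (idx (q + 3)) + n (idx (q + 4)) ≤ n (idx (q + 1)))
    (h2 : n (idx (q + 3)) + n (idx (q + 4)) ≤ n (idx (q + 2)))
    (h5 : n (idx (q + 3)) + n (idx (q + 4)) ≤ n (idx (q + 5)))
    (h6 : n (idx (q + 3)) + n (idx (q + 4)) ≤ n (idx (q + 6))) :
    ∃ y, ecnMove 7 {1, 2} 5 n y ∧ PP y := by
  have hPP : PP (patf q ((n (idx (q + 3)) + n (idx (q + 4)))) (n (idx (q + 3))) (n (idx (q + 4)))) := patf_PP q ((n (idx (q + 3)) + n (idx (q + 4)))) (n (idx (q + 3))) (n (idx (q + 4))) (rfl)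
  have hle : ∀ j, (patf q ((n (idx (q + 3)) + n (idx (q + 4)))) (n (idx (q + 3))) (n (idx (q + 4)))) j ≤ n j := patf_le n q ((n (idx (q + 3)) + n (idx (q + 4)))) (n (idx (q + 3))) (n (idx (q + 4))) h1 h2 le_rfl le_rfl h5 h6
  have hne : (patf q ((n (idx (q + 3)) + n (idx (q + 4)))) (n (idx (q + 3))) (n (idx (q + 4)))) ≠ n := fun h => hn (h ▸ hPP)
  have e3 : (patf q ((n (idx (q + 3)) + n (idx (q + 4)))) (n (idx (q + 3))) (n (idx (q + 4)))) (idx (q + 3)) = n (idx (q + 3)) := patf_at q ((n (idx (q + 3)) + n (idx (q + 4)))) (n (idx (q + 3))) (n (idx (q + 4))) 3 (by norm_num)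
  have e4 : (patf q ((n (idx (q + 3)) + n (idx (q + 4)))) (n (idx (q + 3))) (n (idx (q + 4)))) (idx (q + 4)) = n (idx (q + 4)) := patf_at q ((n (idx (q + 3)) + n (idx (q + 4)))) (n (idx (q + 3))) (n (idx (q + 4))) 4 (by norm_num)
  exact ⟨patf q ((n (idx (q + 3)) + n (idx (q + 4)))) (n (idx (q + 3))) (n (idx (q + 4))), mkMove1 n (patf q ((n (idx (q + 3)) + n (idx (q + 4)))) (n (idx (q + 3))) (n (idx (q + 4)))) (q + 5) hne hle (by rw [Eap (patf q ((n (idx (q + 3)) + n (idx (q + 4)))) (n (idx (q + 3))) (n (idx (q + 4)))) ((q + 5) + 5) (q + 3) (by omega), Eap n ((q + 5) + 5) (q + 3) (by omega)]; exact e3) (by rw [Eap (patf q ((n (idx (q + 3)) + n (idx (q + 4)))) (n (idx (q + 3))) (n (idx (q + 4)))) ((q + 5) + 6) (q + 4) (by omega), Eap n ((q + 5) + 6) (q + 4) (by omega)]; exact e4), hPP⟩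


lemma scheme13 (n : Fin 7 → ℕ) (hn : ¬ PP n) (q : ℕ)
    (hb : n (idx (q + 3)) ≤ n (idx (q + 1)))
    (hs : n (idx (q + 1)) ≤ n (idx (q + 3)) + n (idx (q + 4)))
    (h2 : n (idx (q + 1)) ≤ n (idx (q + 2)))
    (h5 : n (idx (q + 1)) ≤ n (idx (q + 5)))
    (h6 : n (idx (q + 1)) ≤ n (idx (q + 6))) :
    ∃ y, ecnMove 7 {1, 2} 5 n y ∧ PP y := by
  have hPP : PP (patf q (n (idx (q + 1))) (n (idx (q + 3))) ((n (idx (q + 1)) - n (idx (q + 3))))) := patf_PP q (n (idx (q + 1))) (n (idx (q + 3))) ((n (idx (q + 1)) - n (idx (q + 3)))) (by omega)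
  have hle : ∀ j, (patf q (n (idx (q + 1))) (n (idx (q + 3))) ((n (idx (q + 1)) - n (idx (q + 3))))) j ≤ n j := patf_le n q (n (idx (q + 1))) (n (idx (q + 3))) ((n (idx (q + 1)) - n (idx (q + 3)))) le_rfl h2 le_rfl (by omega) h5 h6
  have hne : (patf q (n (idx (q + 1))) (n (idx (q + 3))) ((n (idx (q + 1)) - n (idx (q + 3))))) ≠ n := fun h => hn (h ▸ hPP)
  have e1 : (patf q (n (idx (q + 1))) (n (idx (q + 3))) ((n (idx (q + 1)) - n (idx (q + 3))))) (idx (q + 1)) = n (idx (q + 1)) := patf_at q (n (idx (q + 1))) (n (idx (q + 3))) ((n (idx (q + 1)) - n (idx (q + 3)))) 1 (by norm_num)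
  have e3 : (patf q (n (idx (q + 1))) (n (idx (q + 3))) ((n (idx (q + 1)) - n (idx (q + 3))))) (idx (q + 3)) = n (idx (q + 3)) := patf_at q (n (idx (q + 1))) (n (idx (q + 3))) ((n (idx (q + 1)) - n (idx (q + 3)))) 3 (by norm_num)
  exact ⟨patf q (n (idx (q + 1))) (n (idx (q + 3))) ((n (idx (q + 1)) - n (idx (q + 3)))), mkMove2 n (patf q (n (idx (q + 1))) (n (idx (q + 3))) ((n (idx (q + 1)) - n (idx (q + 3))))) (q + 5) hne hle (by rw [Eap (patf q (n (idx (q + 1))) (n (idx (q + 3))) ((n (idx (q + 1)) - n (idx (q + 3))))) ((q + 5) + 3) (q + 1) (by omega), Eap n ((q + 5) + 3) (q + 1) (by omega)]; exact e1) (by rw [Eap (patf q (n (idx (q + 1))) (n (idx (q + 3))) ((n (idx (q + 1)) - n (idx (q + 3))))) ((q + 5) + 5) (q + 3) (by omega), Eap n ((q + 5) + 5) (q + 3) (by omega)]; exact e3), hPP⟩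


lemma scheme24 (n : Fin 7 → ℕ) (hn : ¬ PP n) (q : ℕ)
    (hb : n (idx (q + 4)) ≤ n (idx (q + 2)))
    (hs : n (idx (q + 2)) ≤ n (idx (q + 3)) + n (idx (q + 4)))
    (h1 : n (idx (q + 2)) ≤ n (idx (q + 1)))
    (h5 : n (idx (q + 2)) ≤ n (idx (q + 5)))
    (h6 : n (idx (q + 2)) ≤ n (idx (q + 6))) :
    ∃ y, ecnMove 7 {1, 2} 5 n y ∧ PP y := by
  have hPP : PP (patf q (n (idx (q + 2))) ((n (idx (q + 2)) - n (idx (q + 4)))) (n (idx (q + 4)))) := patf_PP q (n (idx (q + 2))) ((n (idx (q + 2)) - n (idx (q + 4)))) (n (idx (q + 4))) (by omega)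
  have hle : ∀ j, (patf q (n (idx (q + 2))) ((n (idx (q + 2)) - n (idx (q + 4)))) (n (idx (q + 4)))) j ≤ n j := patf_le n q (n (idx (q + 2))) ((n (idx (q + 2)) - n (idx (q + 4)))) (n (idx (q + 4))) h1 le_rfl (by omega) le_rfl h5 h6
  have hne : (patf q (n (idx (q + 2))) ((n (idx (q + 2)) - n (idx (q + 4)))) (n (idx (q + 4)))) ≠ n := fun h => hn (h ▸ hPP)
  have e2 : (patf q (n (idx (q + 2))) ((n (idx (q + 2)) - n (idx (q + 4)))) (n (idx (q + 4)))) (idx (q + 2)) = n (idx (q + 2)) := patf_at q (n (idx (q + 2))) ((n (idx (q + 2)) - n (idx (q + 4)))) (n (idx (q + 4))) 2 (by norm_num)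
  have e4 : (patf q (n (idx (q + 2))) ((n (idx (q + 2)) - n (idx (q + 4)))) (n (idx (q + 4)))) (idx (q + 4)) = n (idx (q + 4)) := patf_at q (n (idx (q + 2))) ((n (idx (q + 2)) - n (idx (q + 4)))) (n (idx (q + 4))) 4 (by norm_num)
  exact ⟨patf q (n (idx (q + 2))) ((n (idx (q + 2)) - n (idx (q + 4)))) (n (idx (q + 4))), mkMove2 n (patf q (n (idx (q + 2))) ((n (idx (q + 2)) - n (idx (q + 4)))) (n (idx (q + 4)))) (q + 6) hne hle (by rw [Eap (patf q (n (idx (q + 2))) ((n (idx (q + 2)) - n (idx (q + 4)))) (n (idx (q + 4)))) ((q + 6) + 3) (q + 2) (by omega), Eap n ((q + 6) + 3) (q + 2) (by omega)]; exact e2) (by rw [Eap (patf q (n (idx (q + 2))) ((n (idx (q + 2)) - n (idx (q + 4)))) (n (idx (q + 4)))) ((q + 6) + 5) (q + 4) (by omega), Eap n ((q + 6) + 5) (q + 4) (by omega)]; exact e4), hPP⟩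


lemma scheme35 (n : Fin 7 → ℕ) (hn : ¬ PP n) (q : ℕ)
    (hb : n (idx (q + 3)) ≤ n (idx (q + 5)))
    (hs : n (idx (q + 5)) ≤ n (idx (q + 3)) + n (idx (q + 4)))
    (h1 : n (idx (q + 5)) ≤ n (idx (q + 1)))
    (h2 : n (idx (q + 5)) ≤ n (idx (q + 2)))
    (h6 : n (idx (q + 5)) ≤ n (idx (q + 6))) :
    ∃ y, ecnMove 7 {1, 2} 5 n y ∧ PP y := by
  have hPP : PP (patf q (n (idx (q + 5))) (n (idx (q + 3))) ((n (idx (q + 5)) - n (idx (q + 3))))) := patf_PP q (n (idx (q + 5))) (n (idx (q + 3))) ((n (idx (q + 5)) - n (idx (q + 3)))) (by omega)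
  have hle : ∀ j, (patf q (n (idx (q + 5))) (n (idx (q + 3))) ((n (idx (q + 5)) - n (idx (q + 3))))) j ≤ n j := patf_le n q (n (idx (q + 5))) (n (idx (q + 3))) ((n (idx (q + 5)) - n (idx (q + 3)))) h1 h2 le_rfl (by omega) le_rfl h6
  have hne : (patf q (n (idx (q + 5))) (n (idx (q + 3))) ((n (idx (q + 5)) - n (idx (q + 3))))) ≠ n := fun h => hn (h ▸ hPP)
  have e3 : (patf q (n (idx (q + 5))) (n (idx (q + 3))) ((n (idx (q + 5)) - n (idx (q + 3))))) (idx (q + 3)) = n (idx (q + 3)) := patf_at q (n (idx (q + 5))) (n (idx (q + 3))) ((n (idx (q + 5)) - n (idx (q + 3)))) 3 (by norm_num)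
  have e5 : (patf q (n (idx (q + 5))) (n (idx (q + 3))) ((n (idx (q + 5)) - n (idx (q + 3))))) (idx (q + 5)) = n (idx (q + 5)) := patf_at q (n (idx (q + 5))) (n (idx (q + 3))) ((n (idx (q + 5)) - n (idx (q + 3)))) 5 (by norm_num)
  exact ⟨patf q (n (idx (q + 5))) (n (idx (q + 3))) ((n (idx (q + 5)) - n (idx (q + 3)))), mkMove2 n (patf q (n (idx (q + 5))) (n (idx (q + 3))) ((n (idx (q + 5)) - n (idx (q + 3))))) q hne hle (by rw [Eap (patf q (n (idx (q + 5))) (n (idx (q + 3))) ((n (idx (q + 5)) - n (idx (q + 3))))) (q + 3) (q + 3) (by omega), Eap n (q + 3) (q + 3) (by omega)]; exact e3) (by rw [Eap (patf q (n (idx (q + 5))) (n (idx (q + 3))) ((n (idx (q + 5)) - n (idx (q + 3))))) (q + 5) (q + 5) (by omega), Eap n (q + 5) (q + 5) (by omega)]; exact e5), hPP⟩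


lemma scheme46 (n : Fin 7 → ℕ) (hn : ¬ PP n) (q : ℕ)
    (hb : n (idx (q + 4)) ≤ n (idx (q + 6)))
    (hs : n (idx (q + 6)) ≤ n (idx (q + 3)) + n (idx (q + 4)))
    (h1 : n (idx (q + 6)) ≤ n (idx (q + 1)))
    (h2 : n (idx (q + 6)) ≤ n (idx (q + 2)))
    (h5 : n (idx (q + 6)) ≤ n (idx (q + 5))) :
    ∃ y, ecnMove 7 {1, 2} 5 n y ∧ PP y := by
  have hPP : PP (patf q (n (idx (q + 6))) ((n (idx (q + 6)) - n (idx (q + 4)))) (n (idx (q + 4)))) := patf_PP q (n (idx (q + 6))) ((n (idx (q + 6)) - n (idx (q + 4)))) (n (idx (q + 4))) (by omega)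
  have hle : ∀ j, (patf q (n (idx (q + 6))) ((n (idx (q + 6)) - n (idx (q + 4)))) (n (idx (q + 4)))) j ≤ n j := patf_le n q (n (idx (q + 6))) ((n (idx (q + 6)) - n (idx (q + 4)))) (n (idx (q + 4))) h1 h2 (by omega) le_rfl h5 le_rfl
  have hne : (patf q (n (idx (q + 6))) ((n (idx (q + 6)) - n (idx (q + 4)))) (n (idx (q + 4)))) ≠ n := fun h => hn (h ▸ hPP)
  have e4 : (patf q (n (idx (q + 6))) ((n (idx (q + 6)) - n (idx (q + 4)))) (n (idx (q + 4)))) (idx (q + 4)) = n (idx (q + 4)) := patf_at q (n (idx (q + 6))) ((n (idx (q + 6)) - n (idx (q + 4)))) (n (idx (q + 4))) 4 (by norm_num)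
  have e6 : (patf q (n (idx (q + 6))) ((n (idx (q + 6)) - n (idx (q + 4)))) (n (idx (q + 4)))) (idx (q + 6)) = n (idx (q + 6)) := patf_at q (n (idx (q + 6))) ((n (idx (q + 6)) - n (idx (q + 4)))) (n (idx (q + 4))) 6 (by norm_num)
  exact ⟨patf q (n (idx (q + 6))) ((n (idx (q + 6)) - n (idx (q + 4)))) (n (idx (q + 4))), mkMove2 n (patf q (n (idx (q + 6))) ((n (idx (q + 6)) - n (idx (q + 4)))) (n (idx (q + 4)))) (q + 1) hne hle (by rw [Eap (patf q (n (idx (q + 6))) ((n (idx (q + 6)) - n (idx (q + 4)))) (n (idx (q + 4)))) ((q + 1) + 3) (q + 4) (by omega), Eap n ((q + 1) + 3) (q + 4) (by omega)]; exact e4) (by rw [Eap (patf q (n (idx (q + 6))) ((n (idx (q + 6)) - n (idx (q + 4)))) (n (idx (q + 4)))) ((q + 1) + 5) (q + 6) (by omega), Eap n ((q + 1) + 5) (q + 6) (by omega)]; exact e6), hPP⟩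
set_option maxHeartbeats 4000000 in
lemma noPtoP (n y : Fin 7 → ℕ) (hn : PP n) (hy : PP y) (h : ecnMove 7 {1, 2} 5 n y) :
    False := by
  obtain ⟨hne, hle, s, hs, i, hmv⟩ := h
  unfold PP at hn hy
  have l0 := hle (idx 0)
  have l1 := hle (idx 1)
  have l2 := hle (idx 2)
  have l3 := hle (idx 3)
  have l4 := hle (idx 4)
  have l5 := hle (idx 5)
  have l6 := hle (idx 6)
  have hd : y (idx 0) ≠ n (idx 0) ∨ y (idx 1) ≠ n (idx 1) ∨ y (idx 2) ≠ n (idx 2) ∨ y (idx 3) ≠ n (idx 3) ∨ y (idx 4) ≠ n (idx 4) ∨ y (idx 5) ≠ n (idx 5) ∨ y (idx 6) ≠ n (idx 6) := by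
    by_contra hc
    push_neg at hc
    obtain ⟨c0, c1, c2, c3, c4, c5, c6⟩ := hc
    apply hne
    funext j
    fin_cases j
    · exact c0
    · exact c1
    · exact c2
    · exact c3
    · exact c4
    · exact c5
    · exact c6
  have hsum : y (idx 0)+y (idx 1)+y (idx 2)+y (idx 3)+y (idx 4)+y (idx 5)+y (idx 6) < n (idx 0)+n (idx 1)+n (idx 2)+n (idx 3)+n (idx 4)+n (idx 5)+n (idx 6) := by omega
  clear hd hne
  simp only [Set.mem_insert_iff, Set.mem_singleton_iff] at hs
  have hi7 : i % 7 < 7 := by omega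
  rcases hs with rfl | rfl
  ·
    have e5 : y (idx (i + 5)) = n (idx (i + 5)) := by
      by_contra hc
      obtain ⟨t, ht, hteq⟩ := hmv (idx (i + 5)) hc
      have hv : ((idx (i + 5)) : ℕ) = (i + 5) % 7 := rfl
      omega
    have e6 : y (idx (i + 6)) = n (idx (i + 6)) := by
      by_contra hc
      obtain ⟨t, ht, hteq⟩ := hmv (idx (i + 6)) hc
      have hv : ((idx (i + 6)) : ℕ) = (i + 6) % 7 := rfl
      omega
    have hc : i % 7 = 0 ∨ i % 7 = 1 ∨ i % 7 = 2 ∨ i % 7 = 3 ∨ i % 7 = 4 ∨ i % 7 = 5 ∨ i % 7 = 6 := by omega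
    rcases hc with hc | hc | hc | hc | hc | hc | hc
    · simp only [Eap y (i + 5) 5 (by omega), Eap n (i + 5) 5 (by omega), Eap y (i + 6) 6 (by omega), Eap n (i + 6) 6 (by omega)] at e5 e6
      omega
    · simp only [Eap y (i + 5) 6 (by omega), Eap n (i + 5) 6 (by omega), Eap y (i + 6) 0 (by omega), Eap n (i + 6) 0 (by omega)] at e5 e6
      omega
    · simp only [Eap y (i + 5) 0 (by omega), Eap n (i + 5) 0 (by omega), Eap y (i + 6) 1 (by omega), Eap n (i + 6) 1 (by omega)] at e5 e6
      omega
    · simp only [Eap y (i + 5) 1 (by omega), Eap n (i + 5) 1 (by omega), Eap y (i + 6) 2 (by omega), Eap n (i + 6) 2 (by omega)] at e5 e6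
      omega
    · simp only [Eap y (i + 5) 2 (by omega), Eap n (i + 5) 2 (by omega), Eap y (i + 6) 3 (by omega), Eap n (i + 6) 3 (by omega)] at e5 e6
      omega
    · simp only [Eap y (i + 5) 3 (by omega), Eap n (i + 5) 3 (by omega), Eap y (i + 6) 4 (by omega), Eap n (i + 6) 4 (by omega)] at e5 e6
      omega
    · simp only [Eap y (i + 5) 4 (by omega), Eap n (i + 5) 4 (by omega), Eap y (i + 6) 5 (by omega), Eap n (i + 6) 5 (by omega)] at e5 e6
      omega
  ·
    have e3 : y (idx (i + 3)) = n (idx (i + 3)) := by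
      by_contra hc
      obtain ⟨t, ht, hteq⟩ := hmv (idx (i + 3)) hc
      have hv : ((idx (i + 3)) : ℕ) = (i + 3) % 7 := rfl
      omega
    have e5 : y (idx (i + 5)) = n (idx (i + 5)) := by
      by_contra hc
      obtain ⟨t, ht, hteq⟩ := hmv (idx (i + 5)) hc
      have hv : ((idx (i + 5)) : ℕ) = (i + 5) % 7 := rfl
      omega
    have hc : i % 7 = 0 ∨ i % 7 = 1 ∨ i % 7 = 2 ∨ i % 7 = 3 ∨ i % 7 = 4 ∨ i % 7 = 5 ∨ i % 7 = 6 := by omega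
    rcases hc with hc | hc | hc | hc | hc | hc | hc
    · simp only [Eap y (i + 3) 3 (by omega), Eap n (i + 3) 3 (by omega), Eap y (i + 5) 5 (by omega), Eap n (i + 5) 5 (by omega)] at e3 e5
      omega
    · simp only [Eap y (i + 3) 4 (by omega), Eap n (i + 3) 4 (by omega), Eap y (i + 5) 6 (by omega), Eap n (i + 5) 6 (by omega)] at e3 e5
      omega
    · simp only [Eap y (i + 3) 5 (by omega), Eap n (i + 3) 5 (by omega), Eap y (i + 5) 0 (by omega), Eap n (i + 5) 0 (by omega)] at e3 e5
      omega
    · simp only [Eap y (i + 3) 6 (by omega), Eap n (i + 3) 6 (by omega), Eap y (i + 5) 1 (by omega), Eap n (i + 5) 1 (by omega)] at e3 e5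
      omega
    · simp only [Eap y (i + 3) 0 (by omega), Eap n (i + 3) 0 (by omega), Eap y (i + 5) 2 (by omega), Eap n (i + 5) 2 (by omega)] at e3 e5
      omega
    · simp only [Eap y (i + 3) 1 (by omega), Eap n (i + 3) 1 (by omega), Eap y (i + 5) 3 (by omega), Eap n (i + 5) 3 (by omega)] at e3 e5
      omega
    · simp only [Eap y (i + 3) 2 (by omega), Eap n (i + 3) 2 (by omega), Eap y (i + 5) 4 (by omega), Eap n (i + 5) 4 (by omega)] at e3 e5
      omega
set_option maxHeartbeats 1000000 in
lemma toP (n : Fin 7 → ℕ) (hn : ¬ PP n) : ∃ y, ecnMove 7 {1, 2} 5 n y ∧ PP y := by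
  obtain ⟨j, hj⟩ : ∃ j : Fin 7, ∀ i, n j ≤ n i := Finite.exists_min n
  obtain ⟨t, hmin⟩ : ∃ t : ℕ, ∀ k : ℕ, n (idx t) ≤ n (idx k) := by
    refine ⟨j.1, fun k => ?_⟩
    have h := hj (idx k)
    rwa [show (j : Fin 7) = idx j.1 from Fin.ext (Nat.mod_eq_of_lt j.isLt).symm] at h
  rcases le_total (n (idx (t + 1))) (n (idx (t + 6))) with hor | hor
  · have big := cover0 (n (idx (t + 0))) (n (idx (t + 1))) (n (idx (t + 2))) (n (idx (t + 3))) (n (idx (t + 4))) (n (idx (t + 5))) (n (idx (t + 6)))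
      (by rw [Eap n (t + 0) t (by omega)]; exact hmin (t + 1)) (by rw [Eap n (t + 0) t (by omega)]; exact hmin (t + 2)) (by rw [Eap n (t + 0) t (by omega)]; exact hmin (t + 3)) (by rw [Eap n (t + 0) t (by omega)]; exact hmin (t + 4)) (by rw [Eap n (t + 0) t (by omega)]; exact hmin (t + 5)) (by rw [Eap n (t + 0) t (by omega)]; exact hmin (t + 6))
      hor
    rcases big with h | h | h | h | h | h | h | h | h | h
    · refine scheme34 n hn (t + 0) ?_ ?_ ?_ ?_ <;>
        simp only [Eap n (t + 0 + 1) (t + 1) (by omega), Eap n (t + 0 + 2) (t + 2) (by omega), Eap n (t + 0 + 3) (t + 3) (by omega), Eap n (t + 0 + 4) (t + 4) (by omega), Eap n (t + 0 + 5) (t + 5) (by omega), Eap n (t + 0 + 6) (t + 6) (by omega)] <;> omega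
    · refine scheme13 n hn (t + 0) ?_ ?_ ?_ ?_ ?_ <;>
        simp only [Eap n (t + 0 + 1) (t + 1) (by omega), Eap n (t + 0 + 2) (t + 2) (by omega), Eap n (t + 0 + 3) (t + 3) (by omega), Eap n (t + 0 + 4) (t + 4) (by omega), Eap n (t + 0 + 5) (t + 5) (by omega), Eap n (t + 0 + 6) (t + 6) (by omega)] <;> omega
    · refine scheme24 n hn (t + 0) ?_ ?_ ?_ ?_ ?_ <;>
        simp only [Eap n (t + 0 + 1) (t + 1) (by omega), Eap n (t + 0 + 2) (t + 2) (by omega), Eap n (t + 0 + 3) (t + 3) (by omega), Eap n (t + 0 + 4) (t + 4) (by omega), Eap n (t + 0 + 5) (t + 5) (by omega), Eap n (t + 0 + 6) (t + 6) (by omega)] <;> omega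
    · refine scheme35 n hn (t + 0) ?_ ?_ ?_ ?_ ?_ <;>
        simp only [Eap n (t + 0 + 1) (t + 1) (by omega), Eap n (t + 0 + 2) (t + 2) (by omega), Eap n (t + 0 + 3) (t + 3) (by omega), Eap n (t + 0 + 4) (t + 4) (by omega), Eap n (t + 0 + 5) (t + 5) (by omega), Eap n (t + 0 + 6) (t + 6) (by omega)] <;> omega
    · refine scheme46 n hn (t + 3) ?_ ?_ ?_ ?_ ?_ <;>
        simp only [Eap n (t + 3 + 1) (t + 4) (by omega), Eap n (t + 3 + 2) (t + 5) (by omega), Eap n (t + 3 + 3) (t + 6) (by omega), Eap n (t + 3 + 4) (t + 0) (by omega), Eap n (t + 3 + 5) (t + 1) (by omega), Eap n (t + 3 + 6) (t + 2) (by omega)] <;> omega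
    · refine scheme34 n hn (t + 4) ?_ ?_ ?_ ?_ <;>
        simp only [Eap n (t + 4 + 1) (t + 5) (by omega), Eap n (t + 4 + 2) (t + 6) (by omega), Eap n (t + 4 + 3) (t + 0) (by omega), Eap n (t + 4 + 4) (t + 1) (by omega), Eap n (t + 4 + 5) (t + 2) (by omega), Eap n (t + 4 + 6) (t + 3) (by omega)] <;> omega
    · refine scheme13 n hn (t + 4) ?_ ?_ ?_ ?_ ?_ <;>
        simp only [Eap n (t + 4 + 1) (t + 5) (by omega), Eap n (t + 4 + 2) (t + 6) (by omega), Eap n (t + 4 + 3) (t + 0) (by omega), Eap n (t + 4 + 4) (t + 1) (by omega), Eap n (t + 4 + 5) (t + 2) (by omega), Eap n (t + 4 + 6) (t + 3) (by omega)] <;> omega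
    · refine scheme24 n hn (t + 4) ?_ ?_ ?_ ?_ ?_ <;>
        simp only [Eap n (t + 4 + 1) (t + 5) (by omega), Eap n (t + 4 + 2) (t + 6) (by omega), Eap n (t + 4 + 3) (t + 0) (by omega), Eap n (t + 4 + 4) (t + 1) (by omega), Eap n (t + 4 + 5) (t + 2) (by omega), Eap n (t + 4 + 6) (t + 3) (by omega)] <;> omega
    · refine scheme35 n hn (t + 4) ?_ ?_ ?_ ?_ ?_ <;>
        simp only [Eap n (t + 4 + 1) (t + 5) (by omega), Eap n (t + 4 + 2) (t + 6) (by omega), Eap n (t + 4 + 3) (t + 0) (by omega), Eap n (t + 4 + 4) (t + 1) (by omega), Eap n (t + 4 + 5) (t + 2) (by omega), Eap n (t + 4 + 6) (t + 3) (by omega)] <;> omega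
    · refine scheme46 n hn (t + 4) ?_ ?_ ?_ ?_ ?_ <;>
        simp only [Eap n (t + 4 + 1) (t + 5) (by omega), Eap n (t + 4 + 2) (t + 6) (by omega), Eap n (t + 4 + 3) (t + 0) (by omega), Eap n (t + 4 + 4) (t + 1) (by omega), Eap n (t + 4 + 5) (t + 2) (by omega), Eap n (t + 4 + 6) (t + 3) (by omega)] <;> omega
  · have big := cover0 (n (idx (t + 0))) (n (idx (t + 6))) (n (idx (t + 5))) (n (idx (t + 4))) (n (idx (t + 3))) (n (idx (t + 2))) (n (idx (t + 1)))
      (by rw [Eap n (t + 0) t (by omega)]; exact hmin (t + 6)) (by rw [Eap n (t + 0) t (by omega)]; exact hmin (t + 5)) (by rw [Eap n (t + 0) t (by omega)]; exact hmin (t + 4)) (by rw [Eap n (t + 0) t (by omega)]; exact hmin (t + 3)) (by rw [Eap n (t + 0) t (by omega)]; exact hmin (t + 2)) (by rw [Eap n (t + 0) t (by omega)]; exact hmin (t + 1))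
      hor
    rcases big with h | h | h | h | h | h | h | h | h | h
    · refine scheme34 n hn (t + 0) ?_ ?_ ?_ ?_ <;>
        simp only [Eap n (t + 0 + 1) (t + 1) (by omega), Eap n (t + 0 + 2) (t + 2) (by omega), Eap n (t + 0 + 3) (t + 3) (by omega), Eap n (t + 0 + 4) (t + 4) (by omega), Eap n (t + 0 + 5) (t + 5) (by omega), Eap n (t + 0 + 6) (t + 6) (by omega)] <;> omega
    · refine scheme46 n hn (t + 0) ?_ ?_ ?_ ?_ ?_ <;>
        simp only [Eap n (t + 0 + 1) (t + 1) (by omega), Eap n (t + 0 + 2) (t + 2) (by omega), Eap n (t + 0 + 3) (t + 3) (by omega), Eap n (t + 0 + 4) (t + 4) (by omega), Eap n (t + 0 + 5) (t + 5) (by omega), Eap n (t + 0 + 6) (t + 6) (by omega)] <;> omega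
    · refine scheme35 n hn (t + 0) ?_ ?_ ?_ ?_ ?_ <;>
        simp only [Eap n (t + 0 + 1) (t + 1) (by omega), Eap n (t + 0 + 2) (t + 2) (by omega), Eap n (t + 0 + 3) (t + 3) (by omega), Eap n (t + 0 + 4) (t + 4) (by omega), Eap n (t + 0 + 5) (t + 5) (by omega), Eap n (t + 0 + 6) (t + 6) (by omega)] <;> omega
    · refine scheme24 n hn (t + 0) ?_ ?_ ?_ ?_ ?_ <;>
        simp only [Eap n (t + 0 + 1) (t + 1) (by omega), Eap n (t + 0 + 2) (t + 2) (by omega), Eap n (t + 0 + 3) (t + 3) (by omega), Eap n (t + 0 + 4) (t + 4) (by omega), Eap n (t + 0 + 5) (t + 5) (by omega), Eap n (t + 0 + 6) (t + 6) (by omega)] <;> omega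
    · refine scheme13 n hn (t + 4) ?_ ?_ ?_ ?_ ?_ <;>
        simp only [Eap n (t + 4 + 1) (t + 5) (by omega), Eap n (t + 4 + 2) (t + 6) (by omega), Eap n (t + 4 + 3) (t + 0) (by omega), Eap n (t + 4 + 4) (t + 1) (by omega), Eap n (t + 4 + 5) (t + 2) (by omega), Eap n (t + 4 + 6) (t + 3) (by omega)] <;> omega
    · refine scheme34 n hn (t + 3) ?_ ?_ ?_ ?_ <;>
        simp only [Eap n (t + 3 + 1) (t + 4) (by omega), Eap n (t + 3 + 2) (t + 5) (by omega), Eap n (t + 3 + 3) (t + 6) (by omega), Eap n (t + 3 + 4) (t + 0) (by omega), Eap n (t + 3 + 5) (t + 1) (by omega), Eap n (t + 3 + 6) (t + 2) (by omega)] <;> omega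
    · refine scheme46 n hn (t + 3) ?_ ?_ ?_ ?_ ?_ <;>
        simp only [Eap n (t + 3 + 1) (t + 4) (by omega), Eap n (t + 3 + 2) (t + 5) (by omega), Eap n (t + 3 + 3) (t + 6) (by omega), Eap n (t + 3 + 4) (t + 0) (by omega), Eap n (t + 3 + 5) (t + 1) (by omega), Eap n (t + 3 + 6) (t + 2) (by omega)] <;> omega
    · refine scheme35 n hn (t + 3) ?_ ?_ ?_ ?_ ?_ <;>
        simp only [Eap n (t + 3 + 1) (t + 4) (by omega), Eap n (t + 3 + 2) (t + 5) (by omega), Eap n (t + 3 + 3) (t + 6) (by omega), Eap n (t + 3 + 4) (t + 0) (by omega), Eap n (t + 3 + 5) (t + 1) (by omega), Eap n (t + 3 + 6) (t + 2) (by omega)] <;> omega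
    · refine scheme24 n hn (t + 3) ?_ ?_ ?_ ?_ ?_ <;>
        simp only [Eap n (t + 3 + 1) (t + 4) (by omega), Eap n (t + 3 + 2) (t + 5) (by omega), Eap n (t + 3 + 3) (t + 6) (by omega), Eap n (t + 3 + 4) (t + 0) (by omega), Eap n (t + 3 + 5) (t + 1) (by omega), Eap n (t + 3 + 6) (t + 2) (by omega)] <;> omega
    · refine scheme13 n hn (t + 3) ?_ ?_ ?_ ?_ ?_ <;>
        simp only [Eap n (t + 3 + 1) (t + 4) (by omega), Eap n (t + 3 + 2) (t + 5) (by omega), Eap n (t + 3 + 3) (t + 6) (by omega), Eap n (t + 3 + 4) (t + 0) (by omega), Eap n (t + 3 + 5) (t + 1) (by omega), Eap n (t + 3 + 6) (t + 2) (by omega)] <;> omega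
theorem ecn7_12_5_P_iff (n : Fin 7 → ℕ) :
    IsP (ecnMove 7 {1, 2} 5) n ↔
      cyc 7 (fun x => x 0 = 0 ∧ x 1 = x 2 ∧ x 2 = x 3 + x 4 ∧ x 3 + x 4 = x 5 ∧
        x 5 = x 6) n := by
  rw [cyc_iff_PP]
  refine gameChar (ecnMove 7 {1, 2} 5) PP (fun x => ∑ j, x j) ?_ ?_ ?_ n
  · intro x y hm
    obtain ⟨hne, hle, -⟩ := hm
    obtain ⟨j, hj⟩ := Function.ne_iff.mp hne
    exact Finset.sum_lt_sum (fun i _ => hle i) ⟨j, Finset.mem_univ j, lt_of_le_of_ne (hle j) hj⟩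
  · intro x y hx hm hy
    exact noPtoP x y hx hy hm
  · exact toP
end

section
/- A position M = (n_0, ..., n_7) in extended circular nim ECN(8_{1,3}, 2) is a P-position if and only if n_0 ⊕ n_2 ⊕ n_4 ⊕ n_6 = 0 and n_1 ⊕ n_3 ⊕ n_5 ⊕ n_7 = 0. -/
/-!
A window `{i, i + s}` with `s` odd meets one even and one odd pile, and any two piles of
opposite parity fit in a window with `s ∈ {1, 3}`. So a move of `ECN(8_{1,3}, 2)` lowers at most
one even and at most one odd pile: the game is the selective sum of the four-pile nims on the even
and on the odd piles. The positions where both nim-sums vanish form a kernel of the move graph: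
a move changes a single pile in some summand, which breaks that nim-sum, and from any other
position Bouton's moves in all summands with nonzero nim-sum, made simultaneously, restore both.
Since plays are finite, the kernel is the set of P-positions.
-/

open Finset Function

section Kernel

variable {α : Type*} {move : α → α → Prop}

structure IsKernel (move : α → α → Prop) (P : α → Prop) : Prop where
  stable : ∀ ⦃x y⦄, P x → move x y → ¬ P y
  absorbing : ∀ ⦃x⦄, ¬ P x → ∃ y, move x y ∧ P y

theorem IsKernel.not_of_isN {P : α → Prop} (hP : IsKernel move P) {x : α} (hx : IsN move x) :
    ¬ P x := by
  induction hx with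
  | intro x y hxy _ ih =>
    intro hx
    obtain ⟨z, hyz, hz⟩ := hP.absorbing (hP.stable hx hxy)
    exact ih z hyz hz

theorem IsKernel.isP_iff {P : α → Prop} (hP : IsKernel move P) (hwf : WellFounded (flip move))
    (x : α) : IsP move x ↔ P x := by
  have key : ∀ x, (P x → IsP move x) ∧ (¬ P x → IsN move x) := by
    intro x
    induction x using hwf.induction with
    | _ x ih =>
      refine ⟨fun hx y hxy => (ih y hxy).2 (hP.stable hx hxy), fun hx => ?_⟩
      obtain ⟨y, hxy, hy⟩ := hP.absorbing hx
      exact IsN.intro x y hxy ((ih y hxy).1 hy)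
  refine ⟨fun hx => by_contra fun hnx => ?_, (key x).1⟩
  obtain ⟨y, hxy, hy⟩ := hP.absorbing hnx
  exact hP.not_of_isN (hx y hxy) hy

end Kernel

section NimSum

variable {ι : Type*} {s : Finset ι} {x y : ι → ℕ}

def nimSum (s : Finset ι) (x : ι → ℕ) : ℕ := s.fold (· ^^^ ·) 0 x

@[simp]
theorem nimSum_empty (x : ι → ℕ) : nimSum ∅ x = 0 := fold_empty

@[simp]
theorem nimSum_insert [DecidableEq ι] {a : ι} (ha : a ∉ s) :
    nimSum (insert a s) x = x a ^^^ nimSum s x :=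
  fold_insert ha

@[simp]
theorem nimSum_singleton (a : ι) (x : ι → ℕ) : nimSum {a} x = x a := by
  simp [nimSum]

theorem nimSum_congr (h : ∀ i ∈ s, x i = y i) : nimSum s x = nimSum s y :=
  fold_congr h

theorem nimSum_update_of_mem [DecidableEq ι] {i : ι} (hi : i ∈ s) (v : ℕ) :
    nimSum s (update x i v) = nimSum s x ^^^ x i ^^^ v := by
  rw [← insert_erase hi, nimSum_insert (notMem_erase i s), nimSum_insert (notMem_erase i s),
    nimSum_congr fun j hj => update_of_ne (ne_of_mem_erase hj) v x, update_self]
  ac_nf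
  rw [xor_cancel_left]

theorem exists_testBit_of_testBit_nimSum {k : ℕ} (h : (nimSum s x).testBit k) :
    ∃ i ∈ s, (x i).testBit k := by
  classical
  contrapose! h
  induction s using Finset.induction_on with
  | empty => simp
  | insert a s ha ih =>
    simp only [mem_insert, forall_eq_or_imp] at h
    simp [ha, Nat.testBit_xor, h.1, ih h.2]

/-- Bouton's winning move: lowering `x i` to `x i ^^^ nimSum s x` makes the nim-sum zero. The
pile `i` is one carrying the leading bit of the nim-sum. -/
theorem exists_xor_nimSum_lt (h : nimSum s x ≠ 0) : ∃ i ∈ s, x i ^^^ nimSum s x < x i := by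
  obtain ⟨k, hk, hk_top⟩ := Nat.exists_most_significant_bit h
  obtain ⟨i, hi, hik⟩ := exists_testBit_of_testBit_nimSum hk
  refine ⟨i, hi, Nat.lt_of_testBit k ?_ hik fun j hj => ?_⟩
  · simp [Nat.testBit_xor, hk, hik]
  · simp [Nat.testBit_xor, hk_top j hj]

end NimSum

section SelectiveNim

variable {ι κ : Type*} [Fintype ι] [DecidableEq κ] {c : ι → κ} {x y : ι → ℕ}

/-- Moves of the selective sum of the nim games on the fibres of `c`. -/
def selectiveNimMove (c : ι → κ) (x y : ι → ℕ) : Prop :=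
  y < x ∧ Set.InjOn c {j | y j ≠ x j}

theorem nimSum_fibre_of_injOn (hinj : Set.InjOn c {j | y j ≠ x j}) {j : ι} (hj : y j ≠ x j) :
    nimSum {i | c i = c j} y = nimSum {i | c i = c j} x ^^^ x j ^^^ y j := by
  classical
  rw [← nimSum_update_of_mem (by simp)]
  refine nimSum_congr fun i hi => ?_
  rcases eq_or_ne i j with rfl | hij
  · simp
  · rw [update_of_ne hij]
    by_contra hi'
    exact hij (hinj hi' hj (by simpa using hi))

theorem selectiveNimMove_stable (hx : ∀ k, nimSum {i | c i = k} x = 0)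
    (hxy : selectiveNimMove c x y) : ¬ ∀ k, nimSum {i | c i = k} y = 0 := by
  intro hy
  obtain ⟨hyx, hinj⟩ := hxy
  obtain ⟨j, hj⟩ := (Pi.lt_def.1 hyx).2
  have := nimSum_fibre_of_injOn hinj hj.ne
  rw [hy, hx, Nat.zero_xor, eq_comm, xor_eq_zero_iff] at this
  exact hj.ne' this

theorem selectiveNimMove_absorbing (hx : ¬ ∀ k, nimSum {i | c i = k} x = 0) :
    ∃ y, selectiveNimMove c x y ∧ ∀ k, nimSum {i | c i = k} y = 0 := by
  classical
  obtain ⟨k₀, hk₀⟩ := not_forall.1 hx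
  have : Nonempty ι := let ⟨i, _⟩ := exists_xor_nimSum_lt hk₀; ⟨i⟩
  set S := fun k => nimSum {i | c i = k} x
  -- lower Bouton's pile `f k` in every fibre `k` with nonzero nim-sum, all at once
  choose! f hf using fun k (hk : S k ≠ 0) => exists_xor_nimSum_lt hk
  have hfc : ∀ k, S k ≠ 0 → c (f k) = k := fun k hk => by simpa using (hf k hk).1
  set y : ι → ℕ := fun j => if j = f (c j) then x j ^^^ S (c j) else x j
  have hy_fibre : ∀ k, ∀ i ∈ ({i | c i = k} : Finset ι),
      y i = update x (f k) (x (f k) ^^^ S k) i := by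
    intro k i hi
    obtain rfl : c i = k := by simpa using hi
    by_cases h : i = f (c i)
    · simp [y, ← h]
    · simp [y, h]
  have hy_le : ∀ j, y j ≤ x j := by
    intro j
    by_cases h : j = f (c j)
    · by_cases hS : S (c j) = 0
      · simp [y, hS]
      · simpa [y, ← h] using (hf _ hS).2.le
    · simp [y, h]
  refine ⟨y, ⟨Pi.lt_def.2 ⟨hy_le, f k₀, ?_⟩, ?_⟩, fun k => ?_⟩
  · simpa [y, hfc k₀ hk₀] using (hf k₀ hk₀).2
  · intro a ha b hb hab
    have hfix : ∀ j, y j ≠ x j → j = f (c j) := fun j hj => by_contra fun h => hj (if_neg h)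
    rw [hfix a ha, hfix b hb, hab]
  · rw [nimSum_congr (hy_fibre k)]
    by_cases hk : S k = 0
    · rwa [hk, Nat.xor_zero, update_eq_self]
    · rw [nimSum_update_of_mem (by simpa using hfc k hk)]
      exact xor_eq_zero_iff.2 (Nat.xor_comm _ _)

theorem isP_selectiveNimMove_iff :
    IsP (selectiveNimMove c) x ↔ ∀ k, nimSum {i | c i = k} x = 0 := by
  have hwf : WellFounded (flip (selectiveNimMove c)) :=
    Subrelation.wf (fun h => h.1) wellFounded_lt
  exact IsKernel.isP_iff ⟨fun _ _ => selectiveNimMove_stable, fun _ => selectiveNimMove_absorbing⟩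
    hwf x

end SelectiveNim

section CircularNim

theorem exists_ecn_window {a b : Fin 8} (hab : (a : ℕ) % 2 ≠ (b : ℕ) % 2) :
    ∃ s ∈ ({1, 3} : Set ℕ), ∃ i : ℕ, ∀ j : Fin 8, (j = a ∨ j = b) →
      ∃ t < 2, (j : ℕ) = (i + t * s) % 8 := by
  simp only [Set.mem_insert_iff, Set.mem_singleton_iff]
  -- start the window at whichever of `a`, `b` has the other at clockwise distance `≤ 3`
  by_cases hd : ((b : ℕ) + 8 - a) % 8 ≤ 3
  · refine ⟨((b : ℕ) + 8 - a) % 8, by omega, a, ?_⟩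
    rintro j (rfl | rfl)
    · exact ⟨0, by omega, by omega⟩
    · exact ⟨1, by omega, by omega⟩
  · refine ⟨((a : ℕ) + 8 - b) % 8, by omega, b, ?_⟩
    rintro j (rfl | rfl)
    · exact ⟨1, by omega, by omega⟩
    · exact ⟨0, by omega, by omega⟩

theorem ecnMove_8_13_2_eq_selectiveNimMove :
    ecnMove 8 {1, 3} 2 = selectiveNimMove fun j : Fin 8 => (j : ℕ) % 2 := by
  ext x y
  constructor
  · rintro ⟨hne, hle, s, hs, i, hwin⟩
    refine ⟨lt_of_le_of_ne hle hne, fun a ha b hb hab => Fin.ext ?_⟩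
    obtain ⟨t, ht, hat⟩ := hwin a ha
    obtain ⟨u, hu, hbu⟩ := hwin b hb
    simp only at hab
    rcases hs with rfl | rfl <;> omega
  · rintro ⟨hyx, hinj⟩
    obtain ⟨a, ha⟩ := (Pi.lt_def.1 hyx).2
    obtain ⟨b, hab, hb⟩ : ∃ b : Fin 8, (a : ℕ) % 2 ≠ (b : ℕ) % 2 ∧
        ∀ j, y j ≠ x j → (j : ℕ) % 2 = (b : ℕ) % 2 → j = b := by
      by_cases h : ∃ b, y b ≠ x b ∧ (a : ℕ) % 2 ≠ (b : ℕ) % 2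
      · obtain ⟨b, hb, hab⟩ := h
        exact ⟨b, hab, fun j hj hjb => hinj hj hb hjb⟩
      · push Not at h
        refine ⟨⟨((a : ℕ) + 1) % 8, by omega⟩, by simp; omega, fun j hj hjb => ?_⟩
        have := h j hj
        simp only at hjb
        omega
    obtain ⟨s, hs, i, hwin⟩ := exists_ecn_window hab
    refine ⟨hyx.ne, hyx.le, s, hs, i, fun j hj => hwin j ?_⟩
    by_cases hja : (j : ℕ) % 2 = (a : ℕ) % 2
    · exact Or.inl (hinj hj ha.ne hja)
    · exact Or.inr (hb j hj (by omega))

end CircularNim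

theorem ecn8_13_2_P_iff (n : Fin 8 → ℕ) :
    IsP (ecnMove 8 {1, 3} 2) n ↔
      n 0 ^^^ n 2 ^^^ n 4 ^^^ n 6 = 0 ∧ n 1 ^^^ n 3 ^^^ n 5 ^^^ n 7 = 0 := by
  rw [ecnMove_8_13_2_eq_selectiveNimMove, isP_selectiveNimMove_iff]
  have h_even : nimSum {j : Fin 8 | (j : ℕ) % 2 = 0} n = n 0 ^^^ n 2 ^^^ n 4 ^^^ n 6 := by
    rw [show ({j : Fin 8 | (j : ℕ) % 2 = 0} : Finset (Fin 8)) = {0, 2, 4, 6} by decide]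
    simp [Nat.xor_assoc]
  have h_odd : nimSum {j : Fin 8 | (j : ℕ) % 2 = 1} n = n 1 ^^^ n 3 ^^^ n 5 ^^^ n 7 := by
    rw [show ({j : Fin 8 | (j : ℕ) % 2 = 1} : Finset (Fin 8)) = {1, 3, 5, 7} by decide]
    simp [Nat.xor_assoc]
  have h_empty (k : ℕ) : nimSum {j : Fin 8 | (j : ℕ) % 2 = k + 2} n = 0 := by
    convert nimSum_empty n
    ext j
    simp only [mem_filter, mem_univ, true_and, notMem_empty, iff_false]
    omega
  refine ⟨fun h => ⟨h_even ▸ h 0, h_odd ▸ h 1⟩, fun ⟨h0, h1⟩ k => ?_⟩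
  rcases k with _ | _ | k
  exacts [h_even ▸ h0, h_odd ▸ h1, h_empty k]
end

section
/- A position M = (n_0, ..., n_7) in extended circular nim ECN(8_{1,3}, 4) is a P-position if and only if n_0 = n_4, n_1 = n_5, n_2 = n_6, and n_3 = n_7. -/
def op (j : Fin 8) : Fin 8 := ⟨(j.1 + 4) % 8, by omega⟩

lemma op_op (j : Fin 8) : op (op j) = j := by
  have := j.isLt
  apply Fin.ext
  show ((j.1 + 4) % 8 + 4) % 8 = j.1
  omega

-- no move set contains both j and j+4
lemma not_both (s i t1 t2 a : ℕ) (hs : s = 1 ∨ s = 3) (h1 : t1 < 4) (h2 : t2 < 4)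
    (_ha : a < 8) (e1 : a = (i + t1 * s) % 8) (e2 : (a + 4) % 8 = (i + t2 * s) % 8) : False := by
  rcases hs with rfl | rfl <;> interval_cases t1 <;> interval_cases t2 <;> omega

lemma pair_of_move {x y : Fin 8 → ℕ} (h : ecnMove 8 {1,3} 4 x y) :
    ∀ j : Fin 8, y j ≠ x j → y (op j) = x (op j) := by
  intro j hj
  by_contra hj4
  obtain ⟨-, -, s, hs, i, hcov⟩ := h
  obtain ⟨t1, ht1, e1⟩ := hcov j hj
  obtain ⟨t2, ht2, e2⟩ := hcov (op j) hj4
  have hs' : s = 1 ∨ s = 3 := by simpa using hs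
  exact not_both s i t1 t2 j.1 hs' ht1 ht2 j.isLt e1 (by simpa [op] using e2)

lemma cover : ∀ b : Fin 4 → Bool, ∃ sb : Bool, ∃ i : Fin 8, ∀ p : Fin 4,
    ∃ t : Fin 4, (p.1 + (cond (b p) 4 0)) % 8 = (i.1 + t.1 * (cond sb 3 1)) % 8 := by decide

def lowF (p : Fin 4) : Fin 8 := ⟨p.1, by omega⟩

def bfun (x y : Fin 8 → ℕ) (p : Fin 4) : Bool := decide (y (lowF p) = x (lowF p))

lemma move_of (x y : Fin 8 → ℕ) (hne : y ≠ x) (hle : ∀ j, y j ≤ x j)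
    (hp : ∀ j : Fin 8, y j ≠ x j → y (op j) = x (op j)) : ecnMove 8 {1,3} 4 x y := by
  refine ⟨hne, hle, ?_⟩
  obtain ⟨sb, i, hcov⟩ := cover (bfun x y)
  refine ⟨cond sb 3 1, by cases sb <;> simp, i.1, ?_⟩
  intro j hj
  have hjlt := j.isLt
  by_cases h4 : j.1 < 4
  · have hlow : lowF ⟨j.1, h4⟩ = j := Fin.ext rfl
    have hb : bfun x y ⟨j.1, h4⟩ = false := by
      unfold bfun; rw [hlow]; simp [hj]
    obtain ⟨t, ht⟩ := hcov ⟨j.1, h4⟩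
    rw [hb] at ht
    simp only [Bool.cond_false] at ht
    have hp1 : ((⟨j.1, h4⟩ : Fin 4) : ℕ) = j.1 := rfl
    exact ⟨t.1, t.isLt, by omega⟩
  · have hlow : lowF ⟨j.1 - 4, by omega⟩ = op j := by
      apply Fin.ext; show j.1 - 4 = (j.1 + 4) % 8; omega
    have hb : bfun x y ⟨j.1 - 4, by omega⟩ = true := by
      unfold bfun; rw [hlow]; simp [hp j hj]
    obtain ⟨t, ht⟩ := hcov ⟨j.1 - 4, by omega⟩
    rw [hb] at ht
    simp only [Bool.cond_true] at ht
    have hp1 : ((⟨j.1 - 4, by omega⟩ : Fin 4) : ℕ) = j.1 - 4 := rfl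
    exact ⟨t.1, t.isLt, by omega⟩

def resp (y : Fin 8 → ℕ) : Fin 8 → ℕ := fun j => min (y j) (y (op j))

lemma resp_pairs (y : Fin 8 → ℕ) : ∀ j, resp y (op j) = resp y j := by
  intro j; simp [resp, op_op, min_comm]

lemma move_resp (y : Fin 8 → ℕ) (h : ∃ j, y (op j) ≠ y j) :
    ecnMove 8 {1,3} 4 y (resp y) := by
  obtain ⟨j, hj⟩ := h
  apply move_of
  · intro he
    have h1 : resp y j = y j := congrFun he j
    have h2 : resp y (op j) = y (op j) := congrFun he (op j)
    simp [resp, op_op] at h1 h2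
    omega
  · intro j; exact min_le_left _ _
  · intro k hk
    have hlt : y (op k) < y k := by
      simp only [resp] at hk; omega
    simp [resp, op_op]
    omega

lemma sum_lt {x y : Fin 8 → ℕ} (hle : ∀ j, y j ≤ x j) (hne : y ≠ x) :
    ∑ j, y j < ∑ j, x j := by
  obtain ⟨j, hj⟩ := Function.ne_iff.mp hne
  exact Finset.sum_lt_sum (fun i _ => hle i)
    ⟨j, Finset.mem_univ j, lt_of_le_of_ne (hle j) hj⟩

lemma unequal_pair {x y : Fin 8 → ℕ} (hpair : ∀ j, x (op j) = x j)
    (h : ecnMove 8 {1,3} 4 x y) : ∃ j, y (op j) ≠ y j := by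
  obtain ⟨j, hj⟩ := Function.ne_iff.mp h.1
  refine ⟨j, ?_⟩
  have h1 : y j < x j := lt_of_le_of_ne (h.2.1 j) hj
  have h2 : y (op j) = x (op j) := pair_of_move h j hj
  rw [h2, hpair]; omega

lemma keyB : ∀ N : ℕ, ∀ x : Fin 8 → ℕ, (∀ j, x (op j) = x j) → ∑ j, x j = N →
    ∀ y, ecnMove 8 {1,3} 4 x y → IsN (ecnMove 8 {1,3} 4) y := by
  intro N
  induction N using Nat.strong_induction_on with
  | _ N IH =>
    intro x hpair hsum y hxy
    have hup := unequal_pair hpair hxy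
    have hmv := move_resp y hup
    refine IsN.intro y (resp y) hmv ?_
    intro u hu
    have hlt : ∑ j, resp y j < N := by
      calc ∑ j, resp y j < ∑ j, y j := sum_lt hmv.2.1 hmv.1
        _ ≤ ∑ j, x j := Finset.sum_le_sum (fun i _ => hxy.2.1 i)
        _ = N := hsum
    exact IH _ hlt (resp y) (resp_pairs y) rfl u hu

lemma notN : ∀ N : ℕ, ∀ x : Fin 8 → ℕ, (∀ j, x (op j) = x j) → ∑ j, x j = N →
    ¬ IsN (ecnMove 8 {1,3} 4) x := by
  intro N
  induction N using Nat.strong_induction_on with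
  | _ N IH =>
    intro x hpair hsum hN
    cases hN with
    | intro x w hxw hw =>
      have hup := unequal_pair hpair hxw
      have hmv := move_resp w hup
      have hIsN := hw (resp w) hmv
      have hlt : ∑ j, resp w j < N := by
        calc ∑ j, resp w j < ∑ j, w j := sum_lt hmv.2.1 hmv.1
          _ ≤ ∑ j, x j := Finset.sum_le_sum (fun i _ => hxw.2.1 i)
          _ = N := hsum
      exact IH _ hlt (resp w) (resp_pairs w) rfl hIsN

theorem ecn8_13_4_P_iff (n : Fin 8 → ℕ) :
    IsP (ecnMove 8 {1, 3} 4) n ↔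
      n 0 = n 4 ∧ n 1 = n 5 ∧ n 2 = n 6 ∧ n 3 = n 7 := by
  have e0 : op 0 = 4 := by decide
  have e1 : op 1 = 5 := by decide
  have e2 : op 2 = 6 := by decide
  have e3 : op 3 = 7 := by decide
  have e4 : op 4 = 0 := by decide
  have e5 : op 5 = 1 := by decide
  have e6 : op 6 = 2 := by decide
  have e7 : op 7 = 3 := by decide
  constructor
  · intro hP
    by_contra hc
    push_neg at hc
    have hup : ∃ j, n (op j) ≠ n j := by
      by_cases h0 : n 0 = n 4
      · by_cases h1 : n 1 = n 5
        · by_cases h2 : n 2 = n 6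
          · exact ⟨3, by rw [e3]; exact fun h => (hc h0 h1 h2) h.symm⟩
          · exact ⟨2, by rw [e2]; exact fun h => h2 h.symm⟩
        · exact ⟨1, by rw [e1]; exact fun h => h1 h.symm⟩
      · exact ⟨0, by rw [e0]; exact fun h => h0 h.symm⟩
    have hmv := move_resp n hup
    have hIsN := hP (resp n) hmv
    exact notN _ (resp n) (resp_pairs n) rfl hIsN
  · rintro ⟨h0, h1, h2, h3⟩
    have hpair : ∀ j, n (op j) = n j := by
      intro j
      fin_cases j
      · show n (op 0) = n 0; rw [e0]; exact h0.symm
      · show n (op 1) = n 1; rw [e1]; exact h1.symm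
      · show n (op 2) = n 2; rw [e2]; exact h2.symm
      · show n (op 3) = n 3; rw [e3]; exact h3.symm
      · show n (op 4) = n 4; rw [e4]; exact h0
      · show n (op 5) = n 5; rw [e5]; exact h1
      · show n (op 6) = n 6; rw [e6]; exact h2
      · show n (op 7) = n 7; rw [e7]; exact h3
    intro y hy
    exact keyB _ n hpair rfl y hy
end

section
/- A position M = (n_0, ..., n_7) in extended circular nim ECN(8_{1,3}, 6) is a P-position if and only if n_0 = n_2 = n_4 = n_6 and n_1 = n_3 = n_5 = n_7. -/
namespace Ecn8Aux

/-- Minimum of the even-indexed piles. -/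
def emin (y : Fin 8 → ℕ) : ℕ := min (min (y 0) (y 2)) (min (y 4) (y 6))

/-- Minimum of the odd-indexed piles. -/
def omin (y : Fin 8 → ℕ) : ℕ := min (min (y 1) (y 3)) (min (y 5) (y 7))

/-- The "levelled" position: evens at their min, odds at their min. -/
def mpos (y : Fin 8 → ℕ) : Fin 8 → ℕ :=
  fun j => if (j : ℕ) % 2 = 0 then emin y else omin y

/-- The candidate P-positions. -/
def Pred (n : Fin 8 → ℕ) : Prop :=
  (n 0 = n 2 ∧ n 2 = n 4 ∧ n 4 = n 6) ∧ (n 1 = n 3 ∧ n 3 = n 5 ∧ n 5 = n 7)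

lemma fin8_cases (j : Fin 8) :
    j = 0 ∨ j = 1 ∨ j = 2 ∨ j = 3 ∨ j = 4 ∨ j = 5 ∨ j = 6 ∨ j = 7 := by
  fin_cases j <;> simp

lemma unchanged_aux : ∀ r : Fin 8, ∀ s : Fin 4, (s : ℕ) ≠ 1 ∧ (s : ℕ) ≠ 3 ∨
    ∃ e : Fin 8, ∃ o : Fin 8, (e : ℕ) % 2 = 0 ∧ (o : ℕ) % 2 = 1 ∧
      ∀ t : Fin 6, (e : ℕ) ≠ ((r : ℕ) + (t : ℕ) * (s : ℕ)) % 8 ∧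
        (o : ℕ) ≠ ((r : ℕ) + (t : ℕ) * (s : ℕ)) % 8 := by decide

lemma cover_aux : ∀ e : Fin 8, ∀ o : Fin 8, (e : ℕ) % 2 = 1 ∨ (o : ℕ) % 2 = 0 ∨
    ∃ s : Fin 4, ∃ i : Fin 8, ((s : ℕ) = 1 ∨ (s : ℕ) = 3) ∧
      ∀ j : Fin 8, j = e ∨ j = o ∨
        ∃ t : Fin 6, (j : ℕ) = ((i : ℕ) + (t : ℕ) * (s : ℕ)) % 8 := by decide

/-- Any move leaves some even-indexed pile and some odd-indexed pile unchanged. -/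
lemma move_unchanged {x y : Fin 8 → ℕ} (h : ecnMove 8 {1, 3} 6 x y) :
    (y 0 = x 0 ∨ y 2 = x 2 ∨ y 4 = x 4 ∨ y 6 = x 6) ∧
    (y 1 = x 1 ∨ y 3 = x 3 ∨ y 5 = x 5 ∨ y 7 = x 7) := by
  obtain ⟨-, -, s, hs, i, hcov⟩ := h
  have hs' : s = 1 ∨ s = 3 := by simpa using hs
  rcases unchanged_aux ⟨i % 8, by omega⟩ ⟨s, by omega⟩ with ⟨hs1, hs3⟩ | ⟨e, o, hep, hop, hmiss⟩
  · have h1 : s ≠ 1 := hs1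
    have h3 : s ≠ 3 := hs3
    omega
  · have hch : ∀ j : Fin 8, y j ≠ x j → (j : ℕ) ≠ (e : ℕ) ∧ (j : ℕ) ≠ (o : ℕ) := by
      intro j hj
      obtain ⟨t, ht, hj'⟩ := hcov j hj
      have h1 : (e : ℕ) ≠ (i % 8 + t * s) % 8 := (hmiss ⟨t, ht⟩).1
      have h2 : (o : ℕ) ≠ (i % 8 + t * s) % 8 := (hmiss ⟨t, ht⟩).2
      have hmod : (i + t * s) % 8 = (i % 8 + t * s) % 8 := by
        generalize t * s = u; omega
      constructor <;> omega
    have hye : y e = x e := by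
      by_contra hne
      exact (hch e hne).1 rfl
    have hyo : y o = x o := by
      by_contra hne
      exact (hch o hne).2 rfl
    constructor
    · have hv : (e : ℕ) = 0 ∨ (e : ℕ) = 2 ∨ (e : ℕ) = 4 ∨ (e : ℕ) = 6 := by
        have := e.isLt; omega
      rcases hv with h | h | h | h
      · exact Or.inl (by rwa [show e = (0 : Fin 8) from Fin.ext (by simpa using h)] at hye)
      · exact Or.inr (Or.inl (by rwa [show e = (2 : Fin 8) from Fin.ext (by simpa using h)] at hye))
      · exact Or.inr (Or.inr (Or.inl (by
          rwa [show e = (4 : Fin 8) from Fin.ext (by simpa using h)] at hye)))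
      · exact Or.inr (Or.inr (Or.inr (by
          rwa [show e = (6 : Fin 8) from Fin.ext (by simpa using h)] at hye)))
    · have hv : (o : ℕ) = 1 ∨ (o : ℕ) = 3 ∨ (o : ℕ) = 5 ∨ (o : ℕ) = 7 := by
        have := o.isLt; omega
      rcases hv with h | h | h | h
      · exact Or.inl (by rwa [show o = (1 : Fin 8) from Fin.ext (by simpa using h)] at hyo)
      · exact Or.inr (Or.inl (by rwa [show o = (3 : Fin 8) from Fin.ext (by simpa using h)] at hyo))
      · exact Or.inr (Or.inr (Or.inl (by
          rwa [show o = (5 : Fin 8) from Fin.ext (by simpa using h)] at hyo)))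
      · exact Or.inr (Or.inr (Or.inr (by
          rwa [show o = (7 : Fin 8) from Fin.ext (by simpa using h)] at hyo)))

/-- Any pointwise reduction keeping one even and one odd pile fixed is a legal move. -/
lemma move_to {y z : Fin 8 → ℕ} (hne : z ≠ y) (hle : ∀ j, z j ≤ y j)
    (e o : Fin 8) (hep : (e : ℕ) % 2 = 0) (hop : (o : ℕ) % 2 = 1)
    (hze : z e = y e) (hzo : z o = y o) : ecnMove 8 {1, 3} 6 y z := by
  refine ⟨hne, hle, ?_⟩
  rcases cover_aux e o with h | h | ⟨s, i, hs, hcov⟩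
  · omega
  · omega
  refine ⟨(s : ℕ), by rcases hs with h | h <;> simp [h], (i : ℕ), ?_⟩
  intro j hj
  rcases hcov j with rfl | rfl | ⟨t, ht⟩
  · exact absurd hze hj
  · exact absurd hzo hj
  · exact ⟨(t : ℕ), t.isLt, ht⟩

lemma m0 (y : Fin 8 → ℕ) : mpos y 0 = emin y := rfl
lemma m1 (y : Fin 8 → ℕ) : mpos y 1 = omin y := rfl
lemma m2 (y : Fin 8 → ℕ) : mpos y 2 = emin y := rfl
lemma m3 (y : Fin 8 → ℕ) : mpos y 3 = omin y := rfl
lemma m4 (y : Fin 8 → ℕ) : mpos y 4 = emin y := rfl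
lemma m5 (y : Fin 8 → ℕ) : mpos y 5 = omin y := rfl
lemma m6 (y : Fin 8 → ℕ) : mpos y 6 = emin y := rfl
lemma m7 (y : Fin 8 → ℕ) : mpos y 7 = omin y := rfl

lemma mpos_le (y : Fin 8 → ℕ) : ∀ j, mpos y j ≤ y j := by
  intro j
  rcases fin8_cases j with rfl | rfl | rfl | rfl | rfl | rfl | rfl | rfl <;>
    simp only [m0, m1, m2, m3, m4, m5, m6, m7, emin, omin] <;> omega

lemma pred_mpos (y : Fin 8 → ℕ) : Pred (mpos y) :=
  ⟨⟨(m0 y).trans (m2 y).symm, (m2 y).trans (m4 y).symm, (m4 y).trans (m6 y).symm⟩,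
   ⟨(m1 y).trans (m3 y).symm, (m3 y).trans (m5 y).symm, (m5 y).trans (m7 y).symm⟩⟩

/-- From any non-balanced position there is a move to the levelled position. -/
lemma step {y : Fin 8 → ℕ} (h : ¬ Pred y) :
    ecnMove 8 {1, 3} 6 y (mpos y) := by
  have hne : mpos y ≠ y := by
    intro heq
    exact h (heq ▸ pred_mpos y)
  obtain ⟨e, hep, hze⟩ : ∃ e : Fin 8, (e : ℕ) % 2 = 0 ∧ mpos y e = y e := by
    have hE : emin y = y 0 ∨ emin y = y 2 ∨ emin y = y 4 ∨ emin y = y 6 := by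
      unfold emin; omega
    rcases hE with h' | h' | h' | h'
    exacts [⟨0, rfl, (m0 y).trans h'⟩, ⟨2, rfl, (m2 y).trans h'⟩,
      ⟨4, rfl, (m4 y).trans h'⟩, ⟨6, rfl, (m6 y).trans h'⟩]
  obtain ⟨o, hop, hzo⟩ : ∃ o : Fin 8, (o : ℕ) % 2 = 1 ∧ mpos y o = y o := by
    have hO : omin y = y 1 ∨ omin y = y 3 ∨ omin y = y 5 ∨ omin y = y 7 := by
      unfold omin; omega
    rcases hO with h' | h' | h' | h'
    exacts [⟨1, rfl, (m1 y).trans h'⟩, ⟨3, rfl, (m3 y).trans h'⟩,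
      ⟨5, rfl, (m5 y).trans h'⟩, ⟨7, rfl, (m7 y).trans h'⟩]
  exact move_to hne (mpos_le y) e o hep hop hze hzo

/-- A move from a balanced position cannot lead to a balanced position. -/
lemma move_from_pred {x y : Fin 8 → ℕ} (hp : Pred x) (hmv : ecnMove 8 {1, 3} 6 x y) :
    ¬ Pred y := by
  intro hpy
  have hu := move_unchanged hmv
  obtain ⟨hne, hle, -⟩ := hmv
  apply hne
  have l0 := hle 0; have l1 := hle 1; have l2 := hle 2; have l3 := hle 3
  have l4 := hle 4; have l5 := hle 5; have l6 := hle 6; have l7 := hle 7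
  obtain ⟨⟨p1, p2, p3⟩, p4, p5, p6⟩ := hp
  obtain ⟨⟨q1, q2, q3⟩, q4, q5, q6⟩ := hpy
  have hall : y 0 = x 0 ∧ y 1 = x 1 ∧ y 2 = x 2 ∧ y 3 = x 3 ∧
      y 4 = x 4 ∧ y 5 = x 5 ∧ y 6 = x 6 ∧ y 7 = x 7 := by
    obtain ⟨he, ho⟩ := hu
    rcases he with h | h | h | h <;> rcases ho with h' | h' | h' | h' <;>
      refine ⟨by omega, by omega, by omega, by omega, by omega, by omega, by omega, by omega⟩
  funext j
  rcases fin8_cases j with rfl | rfl | rfl | rfl | rfl | rfl | rfl | rfl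
  exacts [hall.1, hall.2.1, hall.2.2.1, hall.2.2.2.1, hall.2.2.2.2.1,
    hall.2.2.2.2.2.1, hall.2.2.2.2.2.2.1, hall.2.2.2.2.2.2.2]

lemma sum_lt {x y : Fin 8 → ℕ} (hmv : ecnMove 8 {1, 3} 6 x y) :
    ∑ j, y j < ∑ j, x j := by
  obtain ⟨hne, hle, -⟩ := hmv
  obtain ⟨j, hj⟩ := Function.ne_iff.mp hne
  exact Finset.sum_lt_sum (fun i _ => hle i)
    ⟨j, Finset.mem_univ j, lt_of_le_of_ne (hle j) hj⟩

lemma pred_isP : ∀ (N : ℕ) (n : Fin 8 → ℕ), (∑ j, n j) ≤ N → Pred n →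
    IsP (ecnMove 8 {1, 3} 6) n := by
  intro N
  induction N with
  | zero =>
    intro n hsum hp y hmv
    exfalso
    have hlt := sum_lt hmv
    omega
  | succ N ih =>
    intro n hsum hp y hmv
    have hnpy := move_from_pred hp hmv
    have hmz := step hnpy
    have h1 : ∑ j, y j < ∑ j, n j := sum_lt hmv
    have h2 : ∑ j, mpos y j ≤ ∑ j, y j :=
      Finset.sum_le_sum (fun i _ => mpos_le y i)
    exact IsN.intro y (mpos y) hmz (ih (mpos y) (by omega) (pred_mpos y))

lemma pred_not_isN : ∀ {n : Fin 8 → ℕ}, IsN (ecnMove 8 {1, 3} 6) n → Pred n → False := by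
  intro n h
  induction h with
  | intro x y hxy hy ih =>
    intro hp
    exact ih (mpos y) (step (move_from_pred hp hxy)) (pred_mpos y)

end Ecn8Aux

theorem ecn8_13_6_P_iff (n : Fin 8 → ℕ) :
    IsP (ecnMove 8 {1, 3} 6) n ↔
      (n 0 = n 2 ∧ n 2 = n 4 ∧ n 4 = n 6) ∧ (n 1 = n 3 ∧ n 3 = n 5 ∧ n 5 = n 7) := by
  constructor
  · intro hP
    by_contra hnp
    have hnp' : ¬ Ecn8Aux.Pred n := hnp
    exact Ecn8Aux.pred_not_isN (hP _ (Ecn8Aux.step hnp')) (Ecn8Aux.pred_mpos n)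
  · intro hp
    exact Ecn8Aux.pred_isP (∑ j, n j) n le_rfl hp
end

section
/- Let m > 1 be an integer with 2m+1 prime. A position M = (n_0, n_1, ..., n_{2m}) in extended circular nim ECN((2m+1)_{1,2,...,m-1}, 2m-1) is a P-position if and only if some cyclic rotation or reflection of M lies in P = {M : n_0 = 0, and n_1 = n_2 = ... = n_{m-1} = n_m + n_{m+1} = n_{m+2} = ... = n_{2m}}. -/
/-!
For `2m + 1` prime every `s ∈ {1, …, m - 1}` generates `ℤ/(2m + 1)`, so the piles
`i, i + s, …, i + (2m - 2)s` of a move are all piles but `p = i + (2m - 1)s` and `p + s`: a move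
lowers piles and leaves alone two piles that are neither equal nor opposite (at distance `m`).
On `ℤ/(2m + 1)` the positions of `P` become the patterns "`0` at `z`, the opposite piles `z ± m`
summing to `c`, all other piles `c`", of total `(2m - 1)c`.

No move joins two patterns: `c` drops, so every untouched pile is among `z, z ± m`, and `z ± m`
cannot both be untouched. Conversely let `q` be a smallest pile and suppose no move reaches a
pattern. Trying zeros at `q ∓ m`, which have `q` as an opposite pile, shows that both `n (q ± m)`
lie below every pile apart from `q`; but then a zero at `q`, keeping a smallest pile apart from
`q` and a suitable one of `q ± m`, is a move to a pattern after all.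
-/

theorem IsN.not_isP {α : Type*} {move : α → α → Prop} {x : α} (h : IsN move x) :
    ¬ IsP move x := by
  induction h with
  | intro x y hxy _ ih =>
    intro hP
    cases hP y hxy with
    | intro _ w hyw hw => exact ih w hyw hw

theorem isP_iff_of_kernel {α : Type*} {move : α → α → Prop} {P : α → Prop} (rank : α → ℕ)
    (hrank : ∀ x y, move x y → rank y < rank x) (hstable : ∀ x y, P x → move x y → ¬ P y)
    (habsorb : ∀ x, ¬ P x → ∃ y, move x y ∧ P y) (x : α) : IsP move x ↔ P x := by
  have key : ∀ x, (P x → IsP move x) ∧ (¬ P x → IsN move x) := by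
    intro x
    induction x using (measure rank).wf.induction with
    | _ x ih =>
      refine ⟨fun hP y hy => (ih y (hrank x y hy)).2 (hstable x y hP hy), fun hP => ?_⟩
      obtain ⟨y, hy, hPy⟩ := habsorb x hP
      exact IsN.intro x y hy fun z hz =>
        (ih z ((hrank y z hz).trans (hrank x y hy))).2 (hstable y z hPy hz)
  exact ⟨fun h => by_contra fun hP => ((key x).2 hP).not_isP h, (key x).1⟩

theorem ZMod.exists_lt_eq_add_natCast_mul {p : ℕ} [Fact p.Prime] (i s j : ZMod p) (hs : s ≠ 0) :
    ∃ t < p, j = i + t * s :=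
  ⟨((j - i) * s⁻¹).val, ZMod.val_lt _, by
    rw [ZMod.natCast_zmod_val, mul_assoc, inv_mul_cancel₀ hs, mul_one, add_sub_cancel]⟩

theorem ZMod.eq_of_add_natCast_mul_eq {p : ℕ} [Fact p.Prime] {i s : ZMod p} (hs : s ≠ 0)
    {t t' : ℕ} (ht : t < p) (ht' : t' < p) (h : i + t * s = i + t' * s) : t = t' := by
  have := mul_right_cancel₀ hs (add_left_cancel h)
  rwa [ZMod.natCast_eq_natCast_iff', Nat.mod_eq_of_lt ht, Nat.mod_eq_of_lt ht'] at this

namespace ECN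

variable {m : ℕ}

lemma two_mul_add_one_eq_zero : (2 * m + 1 : ZMod (2 * m + 1)) = 0 := by
  exact_mod_cast ZMod.natCast_self (2 * m + 1)

lemma neg_natCast_eq : -(m : ZMod (2 * m + 1)) = ((m + 1 : ℕ) : ZMod (2 * m + 1)) := by
  push_cast
  linear_combination -(two_mul_add_one_eq_zero (m := m))

lemma natCast_eq_mk {a : ℕ} (h : a < 2 * m + 1) :
    (a : ZMod (2 * m + 1)) = (⟨a, h⟩ : Fin (2 * m + 1)) :=
  Fin.ext (Nat.mod_eq_of_lt h)

lemma natCast_ne_zero_of_lt {a : ℕ} (h0 : 0 < a) (h : a < 2 * m + 1) :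
    (a : ZMod (2 * m + 1)) ≠ 0 := by
  rw [Ne, ZMod.natCast_eq_zero_iff]
  exact fun hdvd => absurd (Nat.le_of_dvd h0 hdvd) (by omega)

lemma natCast_mul_ne_zero (hm : 1 < m) {k : ℕ} (hk1 : 1 ≤ k) (hk4 : k ≤ 4) :
    (k : ZMod (2 * m + 1)) * m ≠ 0 := by
  rw [← Nat.cast_mul, Ne, ZMod.natCast_eq_zero_iff]
  intro h
  have hcop : Nat.Coprime (2 * m + 1) m := by
    rw [show 2 * m + 1 = m * 2 + 1 by ring, Nat.coprime_mul_left_add_left]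
    exact Nat.coprime_one_left m
  have := Nat.le_of_dvd (by omega) (hcop.dvd_of_dvd_mul_right h)
  omega

/- The two offsets `d = ± m` of the piles opposite a pile. Stating the lemmas below for either
one lets every argument also cover its mirror image. -/
section opposite

variable {d : ZMod (2 * m + 1)}

lemma neg_opp (hd : d = m ∨ d = -m) : -d = m ∨ -d = -m := by
  rcases hd with rfl | rfl <;> simp

lemma natCast_mul_opp_ne_zero (hm : 1 < m) (hd : d = m ∨ d = -m) {k : ℕ} (hk1 : 1 ≤ k)
    (hk4 : k ≤ 4) : (k : ZMod (2 * m + 1)) * d ≠ 0 := by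
  rcases hd with rfl | rfl
  · exact natCast_mul_ne_zero hm hk1 hk4
  · rw [mul_neg, neg_ne_zero]
    exact natCast_mul_ne_zero hm hk1 hk4

variable (z : ZMod (2 * m + 1))

lemma add_opp_ne (hm : 1 < m) (hd : d = m ∨ d = -m) : z + d ≠ z := fun h =>
  natCast_mul_opp_ne_zero hm hd (k := 1) le_rfl (by norm_num) (by linear_combination h)

lemma sub_opp_ne (hm : 1 < m) (hd : d = m ∨ d = -m) : z - d ≠ z := fun h =>
  natCast_mul_opp_ne_zero hm hd (k := 1) le_rfl (by norm_num) (by linear_combination -h)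

lemma sub_opp_ne_add_opp (hm : 1 < m) (hd : d = m ∨ d = -m) : z - d ≠ z + d := fun h =>
  natCast_mul_opp_ne_zero hm hd (k := 2) (by norm_num) (by norm_num) (by linear_combination -h)

end opposite

def Apart (m : ℕ) (u v : ZMod (2 * m + 1)) : Prop :=
  v ≠ u ∧ v ≠ u + m ∧ v ≠ u - m

/-- `n` is a member of the paper's `P`, rotated so that its zero sits at `z`, with common
value `c`. -/
def IsPattern (m : ℕ) (z : ZMod (2 * m + 1)) (c : ℕ) (n : ZMod (2 * m + 1) → ℕ) : Prop :=
  n z = 0 ∧ n (z + m) + n (z - m) = c ∧ ∀ j, Apart m z j → n j = c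

def InP (m : ℕ) (n : ZMod (2 * m + 1) → ℕ) : Prop :=
  ∃ z c, IsPattern m z c n

def Move (m : ℕ) (x y : ZMod (2 * m + 1) → ℕ) : Prop :=
  y ≠ x ∧ (∀ j, y j ≤ x j) ∧ ∃ u v, Apart m u v ∧ y u = x u ∧ y v = x v

lemma not_apart_iff {u v : ZMod (2 * m + 1)} :
    ¬ Apart m u v ↔ v = u ∨ v = u + m ∨ v = u - m := by
  unfold Apart
  tauto

lemma apart_iff_of_opp {d : ZMod (2 * m + 1)} (hd : d = m ∨ d = -m) {u v : ZMod (2 * m + 1)} :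
    Apart m u v ↔ v ≠ u ∧ v ≠ u + d ∧ v ≠ u - d := by
  rcases hd with rfl | rfl
  · rfl
  · rw [sub_neg_eq_add, ← sub_eq_add_neg]
    unfold Apart
    tauto

lemma apart_add_opp_add_opp (hm : 1 < m) {d : ZMod (2 * m + 1)} (hd : d = m ∨ d = -m)
    (z : ZMod (2 * m + 1)) : Apart m z (z + d + d) :=
  (apart_iff_of_opp hd).mpr
    ⟨fun h => natCast_mul_opp_ne_zero hm hd (k := 2) (by norm_num) (by norm_num)
        (by linear_combination h),
      fun h => add_opp_ne z hm hd (by linear_combination h),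
      fun h => natCast_mul_opp_ne_zero hm hd (k := 3) (by norm_num) (by norm_num)
        (by linear_combination h)⟩

lemma apart_eq_opp_of_not_apart {u v z : ZMod (2 * m + 1)} (huv : Apart m u v)
    (hu : ¬ Apart m z u) (hv : ¬ Apart m z v) :
    (u = z + m ∧ v = z - m) ∨ (u = z - m ∧ v = z + m) := by
  obtain ⟨h0, h1, h2⟩ := huv
  rw [not_apart_iff] at hu hv
  rcases hu with rfl | rfl | rfl <;> rcases hv with rfl | rfl | rfl <;> simp_all

lemma exists_isMin_apart (hm : 1 < m) (n : ZMod (2 * m + 1) → ℕ) (z : ZMod (2 * m + 1)) :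
    ∃ j, Apart m z j ∧ ∀ k, Apart m z k → n j ≤ n k := by
  classical
  obtain ⟨j, hj, hmin⟩ := Finset.exists_min_image (Finset.univ.filter (Apart m z)) n
    ⟨z + m + m, by simpa using apart_add_opp_add_opp hm (Or.inl rfl) z⟩
  exact ⟨j, (Finset.mem_filter.mp hj).2, fun k hk => hmin k (by simpa using hk)⟩

lemma isPattern_iff_of_opp {d : ZMod (2 * m + 1)} (hd : d = m ∨ d = -m) {z : ZMod (2 * m + 1)}
    {c : ℕ} {n : ZMod (2 * m + 1) → ℕ} :
    IsPattern m z c n ↔ n z = 0 ∧ n (z + d) + n (z - d) = c ∧ ∀ j, Apart m z j → n j = c := by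
  rcases hd with rfl | rfl
  · rfl
  · rw [sub_neg_eq_add, ← sub_eq_add_neg, add_comm (n (z - m))]
    rfl

section stable

variable {z : ZMod (2 * m + 1)} {c : ℕ}

lemma IsPattern.le {n : ZMod (2 * m + 1) → ℕ} (h : IsPattern m z c n) (j : ZMod (2 * m + 1)) :
    n j ≤ c := by
  obtain ⟨h0, hopp, hc⟩ := h
  by_cases hj : Apart m z j
  · exact (hc j hj).le
  · rcases not_apart_iff.mp hj with rfl | rfl | rfl <;> omega

lemma IsPattern.sum_eq (hm : 1 < m) {n : ZMod (2 * m + 1) → ℕ} (h : IsPattern m z c n) :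
    ∑ j, n j = (2 * m - 1) * c := by
  classical
  obtain ⟨h0, hopp, hc⟩ := h
  have hd : (m : ZMod (2 * m + 1)) = m ∨ (m : ZMod (2 * m + 1)) = -m := Or.inl rfl
  have h1 : z ∉ ({z + m, z - m} : Finset _) := by
    simp only [Finset.mem_insert, Finset.mem_singleton, not_or]
    exact ⟨(add_opp_ne z hm hd).symm, (sub_opp_ne z hm hd).symm⟩
  have h2 : z + m ∉ ({z - m} : Finset _) :=
    Finset.notMem_singleton.mpr (sub_opp_ne_add_opp z hm hd).symm
  have hrest : ∀ j ∈ ({z, z + m, z - m} : Finset _)ᶜ, n j = c := fun j hj =>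
    hc j (by simpa [Apart, or_comm, eq_comm] using hj)
  rw [← Finset.sum_add_sum_compl {z, z + m, z - m} n, Finset.sum_insert h1,
    Finset.sum_insert h2, Finset.sum_singleton, Finset.sum_congr rfl hrest, Finset.sum_const,
    Finset.card_compl, Finset.card_insert_of_notMem h1, Finset.card_insert_of_notMem h2,
    Finset.card_singleton, ZMod.card, smul_eq_mul, h0, zero_add, hopp,
    show 2 * m + 1 - (1 + 1 + 1) = 2 * m - 2 by omega, show 2 * m - 1 = 2 * m - 2 + 1 by omega]
  ring

lemma IsPattern.opp_add_le {y : ZMod (2 * m + 1) → ℕ} (h : IsPattern m z c y)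
    {w : ZMod (2 * m + 1)} (hw : y w = 0) : y (w + m) + y (w - m) ≤ c := by
  by_cases hzw : Apart m z w
  · have hc : c = 0 := (h.2.2 w hzw).symm.trans hw
    have := h.le (w + m)
    have := h.le (w - m)
    omega
  rcases not_apart_iff.mp hzw with rfl | rfl | rfl
  · exact h.2.1.le
  · simpa [h.1] using h.le (z + m + m)
  · simpa [h.1] using h.le (z - m - m)

end stable

lemma Move.sum_lt_sum {x y : ZMod (2 * m + 1) → ℕ} (h : Move m x y) : ∑ j, y j < ∑ j, x j := by
  obtain ⟨hne, hle, -⟩ := h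
  obtain ⟨j, hj⟩ := Function.ne_iff.mp hne
  exact Finset.sum_lt_sum (fun i _ => hle i) ⟨j, Finset.mem_univ _, (hle j).lt_of_ne hj⟩

lemma not_inP_of_move (hm : 1 < m) {x y : ZMod (2 * m + 1) → ℕ} (hx : InP m x)
    (hmove : Move m x y) : ¬ InP m y := by
  rintro ⟨z', c', hy⟩
  obtain ⟨z, c, hx⟩ := hx
  have hlt : c' < c := by
    have := hmove.sum_lt_sum
    rw [hx.sum_eq hm, hy.sum_eq hm] at this
    exact lt_of_mul_lt_mul_left' this
  obtain ⟨-, hle, u, v, huv, hu, hv⟩ := hmove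
  have hopp : y (z + m) + y (z - m) ≤ c' := hy.opp_add_le (Nat.le_zero.mp (hx.1 ▸ hle z))
  have hfixed : ∀ w, y w = x w → ¬ Apart m z w := fun w hw hzw => by
    have := hy.le w
    rw [hw, hx.2.2 w hzw] at this
    omega
  have := hx.2.1
  rcases apart_eq_opp_of_not_apart huv (hfixed u hu) (hfixed v hv) with ⟨rfl, rfl⟩ | ⟨rfl, rfl⟩
    <;> omega

def pattern (z d : ZMod (2 * m + 1)) (a b c : ℕ) (j : ZMod (2 * m + 1)) : ℕ :=
  if j = z then 0 else if j = z + d then a else if j = z - d then b else c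

section absorbing

variable {d : ZMod (2 * m + 1)} {n : ZMod (2 * m + 1) → ℕ}

lemma pattern_add_opp (hm : 1 < m) (hd : d = m ∨ d = -m) (z : ZMod (2 * m + 1)) (a b c : ℕ) :
    pattern z d a b c (z + d) = a := by
  simp [pattern, add_opp_ne z hm hd]

lemma pattern_sub_opp (hm : 1 < m) (hd : d = m ∨ d = -m) (z : ZMod (2 * m + 1)) (a b c : ℕ) :
    pattern z d a b c (z - d) = b := by
  simp [pattern, sub_opp_ne z hm hd, sub_opp_ne_add_opp z hm hd]

lemma pattern_of_apart (hd : d = m ∨ d = -m) {z j : ZMod (2 * m + 1)} (hj : Apart m z j)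
    (a b c : ℕ) : pattern z d a b c j = c := by
  obtain ⟨h0, h1, h2⟩ := (apart_iff_of_opp hd).mp hj
  simp [pattern, h0, h1, h2]

lemma isPattern_pattern (hm : 1 < m) (hd : d = m ∨ d = -m) (z : ZMod (2 * m + 1)) {a b c : ℕ}
    (hab : a + b = c) : IsPattern m z c (pattern z d a b c) :=
  (isPattern_iff_of_opp hd).mpr ⟨by simp [pattern], by
    rw [pattern_add_opp hm hd, pattern_sub_opp hm hd, hab], fun _ hj => pattern_of_apart hd hj _ _ _⟩

lemma pattern_le (hd : d = m ∨ d = -m) {z : ZMod (2 * m + 1)} {a b c : ℕ} (ha : a ≤ n (z + d))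
    (hb : b ≤ n (z - d)) (hc : ∀ j, Apart m z j → c ≤ n j) (j : ZMod (2 * m + 1)) :
    pattern z d a b c j ≤ n j := by
  unfold pattern
  split_ifs with h0 h1 h2
  · exact Nat.zero_le _
  · exact h1 ▸ ha
  · exact h2 ▸ hb
  · exact hc j ((apart_iff_of_opp hd).mpr ⟨h0, h1, h2⟩)

lemma exists_move_to_pattern (hm : 1 < m) (hd : d = m ∨ d = -m) (hn : ¬ InP m n)
    {z : ZMod (2 * m + 1)} {a b c : ℕ} (hab : a + b = c) (ha : a ≤ n (z + d))
    (hb : b ≤ n (z - d)) (hc : ∀ j, Apart m z j → c ≤ n j) {u v : ZMod (2 * m + 1)}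
    (huv : Apart m u v) (hu : pattern z d a b c u = n u) (hv : pattern z d a b c v = n v) :
    ∃ y, Move m n y ∧ InP m y :=
  have hpat := isPattern_pattern hm hd z hab
  ⟨_, ⟨fun h => hn ⟨z, c, h ▸ hpat⟩, pattern_le hd ha hb hc, u, v, huv, hu, hv⟩, z, c, hpat⟩

/-- The move keeps `j` and `z + d`, unless `n (z + d) + n (z - d) ≤ n j`; then it keeps
`z ± d`. -/
lemma exists_move_of_isMin (hm : 1 < m) (hd : d = m ∨ d = -m) (hn : ¬ InP m n)
    {z j : ZMod (2 * m + 1)} (hj : Apart m z j) (hmin : ∀ k, Apart m z k → n j ≤ n k)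
    (hle : n (z + d) ≤ n j) (hj' : Apart m (z + d) j) : ∃ y, Move m n y ∧ InP m y := by
  by_cases hS : n (z + d) + n (z - d) ≤ n j
  · have hopp : Apart m (z + d) (z - d) := by
      simpa [sub_eq_add_neg] using apart_add_opp_add_opp hm (neg_opp hd) (z + d)
    exact exists_move_to_pattern hm hd hn rfl le_rfl le_rfl (fun k hk => hS.trans (hmin k hk))
      hopp (pattern_add_opp hm hd z _ _ _) (pattern_sub_opp hm hd z _ _ _)
  · exact exists_move_to_pattern hm hd hn (Nat.add_sub_cancel' hle) le_rfl (by omega) hmin hj'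
      (pattern_add_opp hm hd z _ _ _) (pattern_of_apart hd hj _ _ _)

lemma opp_lt_of_isMin (hm : 1 < m) (hd : d = m ∨ d = -m) (hn : ¬ InP m n)
    (hno : ¬ ∃ y, Move m n y ∧ InP m y) {q : ZMod (2 * m + 1)} (hq : ∀ k, n q ≤ n k)
    {k : ZMod (2 * m + 1)} (hk : Apart m q k) : n (q + d) < n k := by
  set z := q - d
  have hzq : z + d = q := sub_add_cancel q d
  have hminimiser : ∀ i, Apart m z i → (∀ l, Apart m z l → n i ≤ n l) → i = q + d := by
    intro i hi himin
    by_contra hne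
    obtain ⟨hi0, hi1, -⟩ := (apart_iff_of_opp hd).mp hi
    refine hno (exists_move_of_isMin hm hd hn hi himin (hzq ▸ hq i) ?_)
    exact hzq ▸ (apart_iff_of_opp hd).mpr ⟨hzq ▸ hi1, hne, hi0⟩
  obtain ⟨j, hj, hmin⟩ := exists_isMin_apart hm n z
  obtain rfl := hminimiser j hj hmin
  have hlt : n (q + d) < n (z - d) := by
    by_contra! hle
    refine hno (exists_move_of_isMin hm (neg_opp hd) hn hj hmin (by simpa [← sub_eq_add_neg]) ?_)
    rw [← sub_eq_add_neg, apart_iff_of_opp hd, ← hzq]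
    refine ⟨fun h => ?_, fun h => ?_, fun h => ?_⟩
    · exact natCast_mul_opp_ne_zero hm hd (k := 3) (by norm_num) (by norm_num)
        (by linear_combination h)
    · exact natCast_mul_opp_ne_zero hm hd (k := 2) (by norm_num) (by norm_num)
        (by linear_combination h)
    · exact natCast_mul_opp_ne_zero hm hd (k := 4) (by norm_num) (by norm_num)
        (by linear_combination h)
  by_cases hkz : k = z - d
  · exact hkz ▸ hlt
  by_contra! hle
  obtain ⟨hk0, hk1, hk2⟩ := (apart_iff_of_opp hd).mp hk
  have hzk : Apart m z k := (apart_iff_of_opp hd).mpr ⟨hk2, hzq ▸ hk0, hkz⟩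
  exact hk1 (hminimiser k hzk fun l hl => hle.trans (hmin l hl))

lemma exists_move_to_inP (hm : 1 < m) (hn : ¬ InP m n) : ∃ y, Move m n y ∧ InP m y := by
  by_contra hno
  obtain ⟨q, hq⟩ := Finite.exists_min n
  obtain ⟨j, hj, hmin⟩ := exists_isMin_apart hm n q
  have hplus : (m : ZMod (2 * m + 1)) = m ∨ (m : ZMod (2 * m + 1)) = -m := Or.inl rfl
  have hminus : -(m : ZMod (2 * m + 1)) = m ∨ -(m : ZMod (2 * m + 1)) = -m := Or.inr rfl
  by_cases hj2 : j = q + m + m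
  · refine hno (exists_move_of_isMin hm hminus hn hj hmin
      (opp_lt_of_isMin hm hminus hn hno hq hj).le ((apart_iff_of_opp hminus).mpr ⟨?_, ?_, ?_⟩))
    · simpa [sub_eq_add_neg] using hj.2.2
    · exact fun h => natCast_mul_ne_zero hm (k := 4) (by norm_num) le_rfl
        (by linear_combination hj2.symm.trans h)
    · simpa using hj.1
  · exact hno (exists_move_of_isMin hm hplus hn hj hmin (opp_lt_of_isMin hm hplus hn hno hq hj).le
      ⟨hj.2.1, hj2, by simpa using hj.1⟩)

end absorbing

lemma apart_add_natCast (u : ZMod (2 * m + 1)) {s : ℕ} (hs1 : 1 ≤ s) (hs2 : s ≤ m - 1) :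
    Apart m u (u + s) := by
  refine ⟨fun h => natCast_ne_zero_of_lt (m := m) (a := s) (by omega) (by omega)
      (by linear_combination h), fun h => natCast_ne_zero_of_lt (m := m) (a := m - s) (by omega)
      (by omega) ?_, fun h => natCast_ne_zero_of_lt (m := m) (a := s + m) (by omega) (by omega)
      (by push_cast; linear_combination h)⟩
  push_cast [Nat.cast_sub (show s ≤ m by omega)]
  linear_combination -h

lemma exists_natCast_of_apart {u v : ZMod (2 * m + 1)} (h : Apart m u v) :
    ∃ s : ℕ, 1 ≤ s ∧ s ≤ m - 1 ∧ (v = u + s ∨ u = v + s) := by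
  obtain ⟨h0, h1, h2⟩ := h
  obtain ⟨t, ht, hv⟩ : ∃ t < 2 * m + 1, v = u + t :=
    ⟨(v - u).val, ZMod.val_lt _, by rw [ZMod.natCast_zmod_val]; ring⟩
  have ht0 : t ≠ 0 := fun h => h0 (by simpa [h] using hv)
  have htm : t ≠ m := fun h => h1 (h ▸ hv)
  have htm1 : t ≠ m + 1 := fun h => h2 (by
    rw [hv, h]; push_cast; linear_combination (two_mul_add_one_eq_zero (m := m)))
  by_cases hsmall : t ≤ m - 1
  · exact ⟨t, by omega, hsmall, Or.inl hv⟩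
  · refine ⟨2 * m + 1 - t, by omega, by omega, Or.inr ?_⟩
    rw [hv]
    push_cast [Nat.cast_sub ht.le]
    linear_combination -(two_mul_add_one_eq_zero (m := m))

lemma val_eq_mod_iff (j : ZMod (2 * m + 1)) (a : ℕ) : j.val = a % (2 * m + 1) ↔ j = a := by
  rw [← ZMod.val_natCast]
  exact ZMod.val_injective _ |>.eq_iff

section prime

variable [Fact (2 * m + 1).Prime] {x y : ZMod (2 * m + 1) → ℕ}

lemma move_of_ecnMove (h : ecnMove (2 * m + 1) {s | 1 ≤ s ∧ s ≤ m - 1} (2 * m - 1) x y) :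
    Move m x y := by
  obtain ⟨hne, hle, s, ⟨hs1, hs2⟩, i, hi⟩ := h
  have hs : (s : ZMod (2 * m + 1)) ≠ 0 := natCast_ne_zero_of_lt (by omega) (by omega)
  have hfix : ∀ t' : ℕ, 2 * m - 1 ≤ t' → t' < 2 * m + 1 → y (i + t' * s) = x (i + t' * s) := by
    intro t' h1 h2
    by_contra hne
    obtain ⟨t, ht, hj⟩ := hi _ hne
    change ZMod.val (n := 2 * m + 1) _ = _ at hj
    rw [val_eq_mod_iff] at hj
    push_cast at hj
    have := ZMod.eq_of_add_natCast_mul_eq hs h2 (by omega) hj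
    omega
  refine ⟨hne, hle, i + (2 * m - 1 : ℕ) * s, i + (2 * m : ℕ) * s, ?_, hfix _ le_rfl (by omega),
    hfix _ (by omega) (by omega)⟩
  convert apart_add_natCast (i + (2 * m - 1 : ℕ) * s : ZMod (2 * m + 1)) hs1 hs2 using 1
  push_cast [Nat.cast_sub (show 1 ≤ 2 * m by omega)]
  ring

lemma ecnMove_of_move (h : Move m x y) :
    ecnMove (2 * m + 1) {s | 1 ≤ s ∧ s ≤ m - 1} (2 * m - 1) x y := by
  obtain ⟨hne, hle, u, v, huv, hu, hv⟩ := h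
  obtain ⟨s, hs1, hs2, p, hpfix, hpsfix⟩ :
      ∃ s : ℕ, 1 ≤ s ∧ s ≤ m - 1 ∧ ∃ p, y p = x p ∧ y (p + s) = x (p + s) := by
    obtain ⟨s, hs1, hs2, rfl | rfl⟩ := exists_natCast_of_apart huv
    exacts [⟨s, hs1, hs2, u, hu, hv⟩, ⟨s, hs1, hs2, v, hv, hu⟩]
  have hs : (s : ZMod (2 * m + 1)) ≠ 0 := natCast_ne_zero_of_lt (by omega) (by omega)
  -- started at `i = p + 2s`, the progression reaches `p` and `p + s` at its last two steps
  set i := (p + 2 * s).val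
  have hz := two_mul_add_one_eq_zero (m := m)
  have hlast : (i : ZMod (2 * m + 1)) + (2 * m - 1 : ℕ) * s = p := by
    simp only [i, ZMod.natCast_zmod_val]
    push_cast [Nat.cast_sub (show 1 ≤ 2 * m by omega)]
    linear_combination (s : ZMod (2 * m + 1)) * hz
  have hlast' : (i : ZMod (2 * m + 1)) + (2 * m : ℕ) * s = p + s := by
    simp only [i, ZMod.natCast_zmod_val]
    push_cast
    linear_combination (s : ZMod (2 * m + 1)) * hz
  refine ⟨hne, hle, s, ⟨hs1, hs2⟩, i, fun j hj => ?_⟩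
  obtain ⟨t, ht, rfl⟩ := ZMod.exists_lt_eq_add_natCast_mul (i : ZMod (2 * m + 1)) s j hs
  refine ⟨t, ?_, (val_eq_mod_iff _ _).mpr (by push_cast; ring)⟩
  by_contra! hbig
  obtain rfl | rfl : t = 2 * m - 1 ∨ t = 2 * m := by omega
  · exact hj (hlast ▸ hpfix)
  · exact hj (hlast' ▸ hpsfix)

end prime

lemma apart_add_right_iff {u v r : ZMod (2 * m + 1)} :
    Apart m (u + r) (v + r) ↔ Apart m u v := by
  simp only [Apart, add_right_comm u r, ← sub_add_eq_add_sub, ne_eq, add_left_inj]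

lemma apart_sub_left_iff {u v r : ZMod (2 * m + 1)} :
    Apart m (r - u) (r - v) ↔ Apart m u v := by
  simp only [Apart, show r - u + m = r - (u - m) by ring, show r - u - m = r - (u + m) by ring,
    ne_eq, sub_right_inj]
  tauto

lemma isPattern_comp_add_iff {z r : ZMod (2 * m + 1)} {c : ℕ} {n : ZMod (2 * m + 1) → ℕ} :
    IsPattern m z c (fun j => n (j + r)) ↔ IsPattern m (z + r) c n :=
  and_congr Iff.rfl <| and_congr (by rw [add_right_comm, ← sub_add_eq_add_sub]) <|
    (Equiv.addRight r).forall_congr fun j => by simp [apart_add_right_iff]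

lemma isPattern_comp_sub_iff {z r : ZMod (2 * m + 1)} {c : ℕ} {n : ZMod (2 * m + 1) → ℕ} :
    IsPattern m z c (fun j => n (r - j)) ↔ IsPattern m (r - z) c n :=
  and_congr Iff.rfl <| and_congr (by beta_reduce; rw [add_comm, sub_sub, ← sub_add]) <|
    (Equiv.subLeft r).forall_congr fun j => by simp [apart_sub_left_iff]

lemma inP_iff_exists (n : ZMod (2 * m + 1) → ℕ) :
    InP m n ↔ ∃ r : ℕ, (∃ c, IsPattern m 0 c (fun j => n (j + r))) ∨
      ∃ c, IsPattern m 0 c (fun j => n (r - j)) := by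
  simp only [isPattern_comp_add_iff, isPattern_comp_sub_iff, zero_add, sub_zero, or_self]
  exact ⟨fun ⟨z, c, h⟩ => ⟨z.val, c, by rwa [ZMod.natCast_zmod_val]⟩, fun ⟨r, c, h⟩ => ⟨r, c, h⟩⟩

lemma cyc_iff (Q : (Fin (2 * m + 1) → ℕ) → Prop) (n : ZMod (2 * m + 1) → ℕ) :
    cyc (2 * m + 1) Q n ↔
      ∃ r : ℕ, Q (fun j : ZMod (2 * m + 1) => n (j + r)) ∨
        Q (fun j : ZMod (2 * m + 1) => n (r - j)) := by
  refine exists_congr fun r => or_congr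
    (iff_of_eq (congrArg Q (funext fun (j : ZMod (2 * m + 1)) => congrArg n ?_)))
    (iff_of_eq (congrArg Q (funext fun (j : ZMod (2 * m + 1)) => congrArg n ?_)))
  · show ((j.val + r : ℕ) : ZMod (2 * m + 1)) = _
    rw [Nat.cast_add, ZMod.natCast_zmod_val]
  · show ((r + (2 * m + 1 - j.val) : ℕ) : ZMod (2 * m + 1)) = _
    rw [Nat.cast_add, Nat.cast_sub (ZMod.val_lt j).le, ZMod.natCast_zmod_val, Nat.cast_add,
      Nat.cast_mul, Nat.cast_ofNat, Nat.cast_one, two_mul_add_one_eq_zero, zero_sub,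
      sub_eq_add_neg]

lemma apart_zero_iff (hm : 1 < m) (j : Fin (2 * m + 1)) :
    Apart m 0 j ↔ j.val ≠ 0 ∧ j.val ≠ m ∧ j.val ≠ m + 1 := by
  unfold Apart
  rw [zero_add, zero_sub, neg_natCast_eq, natCast_eq_mk (by omega), natCast_eq_mk (by omega)]
  exact and_congr (not_congr Fin.ext_iff) (and_congr (not_congr Fin.ext_iff) (not_congr Fin.ext_iff))

lemma isPattern_zero_iff (hm : 1 < m) (x : Fin (2 * m + 1) → ℕ) :
    (∃ c, IsPattern m 0 c x) ↔
      x ⟨0, Nat.succ_pos _⟩ = 0 ∧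
        ∃ c : ℕ, (∀ j : Fin (2 * m + 1), 1 ≤ j.1 → j.1 ≤ m - 1 → x j = c) ∧
          x ⟨m, by linarith⟩ + x ⟨m + 1, by linarith⟩ = c ∧
          (∀ j : Fin (2 * m + 1), m + 2 ≤ j.1 → x j = c) := by
  have hplus : (0 + m : ZMod (2 * m + 1)) = (⟨m, by omega⟩ : Fin (2 * m + 1)) := by
    rw [zero_add]
    exact natCast_eq_mk _
  have hminus : (0 - m : ZMod (2 * m + 1)) = (⟨m + 1, by omega⟩ : Fin (2 * m + 1)) := by
    rw [zero_sub, neg_natCast_eq]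
    exact natCast_eq_mk _
  constructor
  · rintro ⟨c, hz, hopp, hc⟩
    rw [hplus, hminus] at hopp
    exact ⟨hz, c, fun j h1 h2 => hc j ((apart_zero_iff hm j).mpr ⟨by omega, by omega, by omega⟩),
      hopp, fun j h => hc j ((apart_zero_iff hm j).mpr ⟨by omega, by omega, by omega⟩)⟩
  · rintro ⟨hz, c, hlow, hopp, hhigh⟩
    refine ⟨c, hz, by rwa [hplus, hminus], fun (j : Fin (2 * m + 1)) hj => ?_⟩
    obtain ⟨h0, h1, h2⟩ := (apart_zero_iff hm j).mp hj
    by_cases hj : j.1 ≤ m - 1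
    · exact hlow j (by omega) hj
    · exact hhigh j (by omega)

end ECN

theorem ecn_odd_prime_P_iff (m : ℕ) (hm : 1 < m) (hp : Nat.Prime (2 * m + 1))
    (n : Fin (2 * m + 1) → ℕ) :
    IsP (ecnMove (2 * m + 1) {s | 1 ≤ s ∧ s ≤ m - 1} (2 * m - 1)) n ↔
      cyc (2 * m + 1) (fun x =>
        x ⟨0, by omega⟩ = 0 ∧
        ∃ c : ℕ, (∀ j : Fin (2 * m + 1), 1 ≤ j.1 → j.1 ≤ m - 1 → x j = c) ∧
          x ⟨m, by omega⟩ + x ⟨m + 1, by omega⟩ = c ∧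
          (∀ j : Fin (2 * m + 1), m + 2 ≤ j.1 → x j = c)) n := by
  have := Fact.mk hp
  have hmove : ecnMove (2 * m + 1) {s | 1 ≤ s ∧ s ≤ m - 1} (2 * m - 1) = ECN.Move m :=
    funext₂ fun _ _ => propext ⟨ECN.move_of_ecnMove, ECN.ecnMove_of_move⟩
  have hP : ∀ x, IsP (ECN.Move m) x ↔ ECN.InP m x :=
    isP_iff_of_kernel (fun x => ∑ j, x j) (fun _ _ => ECN.Move.sum_lt_sum)
      (fun _ _ => ECN.not_inP_of_move hm) (fun _ => ECN.exists_move_to_inP hm)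
  rw [hmove]
  refine (hP n).trans <| (ECN.inP_iff_exists n).trans <| Iff.trans ?_ (ECN.cyc_iff _ n).symm
  exact exists_congr fun _ => or_congr (ECN.isPattern_zero_iff hm _) (ECN.isPattern_zero_iff hm _)
end
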